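/- arXiv:1312.7144 — 8 statements merged into one kernel-verified Lean document; each statement's English description precedes it below -/
import Mathlib

section
/- Let k be an algebraically closed field and let g, h ∈ k[x] be coprime polynomials with h·g′ − g·h′ ≠ 0. Let c ∈ k be a point with h(c) ≠ 0, and set v = g(c)/h(c) ∈ k. Let B be the localization of k[x] at the maximal ideal (x − c), let A be the localization of k[y] at the maximal ideal (y − v), and give B the A-algebra structure induced by the ring homomorphism k[y] → B sending y to the element g/h (which lies in B since h is invertible in B). Then the length of the module of Kähler differentials Ω_{B/A} as a B-module equals the multiplicity of c as a root of the polynomial h·g′ − g·h′. -/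
/-!
The local ring `B` is a discrete valuation ring with uniformizer `x - c`, and `Ω_{B/A}` is generated
by `dx`. As `y = g/h` is constant over `A`, the quotient rule `dy = W(h, g)/h² dx` forces
`W(h, g) dx = 0`, where `W(h, g) = h g' - g h'`. Conversely `d/dx` extends to the localization `B`,
and modulo `W(h, g)` it kills `y`, hence all of `A`; it therefore induces `Ω_{B/A} → B/(W(h, g))`
sending `dx` to `1`. So `Ω_{B/A} ≅ B/(W(h, g))`, whose length is the order of vanishing of
`W(h, g)` at `c`.
-/

open Polynomial

namespace Derivation

section Localization

variable {R S T : Type*} [CommRing R] [CommRing S] [CommRing T]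
  [Algebra R S] [Algebra S T] [Algebra R T] [IsScalarTower R S T]

open TrivSqZeroExt in
/-- Derivations `S → T` are the ring maps `S → T[ε]` lifting `algebraMap S T`, and these extend to
the localization `T` because an element of `T[ε]` is a unit as soon as its constant term is. -/
theorem exists_extend_of_isLocalization (W : Submonoid S) [IsLocalization W T]
    (d : Derivation R S T) : ∃ d' : Derivation R T T, ∀ s, d' (algebraMap S T s) = d s := by
  let φ : S →+* TrivSqZeroExt T T :=
    { toFun s := inl (algebraMap S T s) + inr (d s)
      map_one' := by ext <;> simp
      map_mul' s s' := by
        ext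
        · simp
        · simp only [snd_mul, snd_add, fst_add, snd_inl, snd_inr, fst_inl, fst_inr, leibniz,
            Algebra.smul_def, Algebra.algebraMap_self, RingHom.id_apply, op_smul_eq_mul]
          ring
      map_zero' := by ext <;> simp
      map_add' s s' := by ext <;> simp }
  have hφ : ∀ w : W, IsUnit (φ w) := fun w =>
    isUnit_iff_isUnit_fst.mpr (by simpa [φ] using IsLocalization.map_units T w)
  let ψ : T →+* TrivSqZeroExt T T := IsLocalization.lift hφ
  have hψ : ∀ s, ψ (algebraMap S T s) = inl (algebraMap S T s) + inr (d s) :=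
    IsLocalization.lift_eq hφ
  have hfst : ∀ z, (ψ z).fst = z := by
    have : (fstHom T T T).toRingHom.comp ψ = RingHom.id T :=
      IsLocalization.ringHom_ext W (RingHom.ext fun s => by simp [hψ])
    exact fun z => RingHom.congr_fun this z
  have hψR : ∀ r : R, ψ (algebraMap R T r) = inl (algebraMap R T r) := fun r => by
    rw [IsScalarTower.algebraMap_apply R S T, hψ, map_algebraMap, inr_zero, add_zero]
  refine ⟨mk' { toFun z := (ψ z).snd, map_add' _ _ := by simp, map_smul' r z := ?_ }
    fun z z' => ?_, fun s => by simp [hψ]⟩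
  · simp [Algebra.smul_def, hψR]
  · show (ψ (z * z')).snd = z • (ψ z').snd + z' • (ψ z).snd
    simp only [map_mul, snd_mul, hfst, op_smul_eq_mul, smul_eq_mul]
    ring

theorem exists_map_algebraMap_eq_derivative [Algebra R[X] T] [IsScalarTower R R[X] T]
    (W : Submonoid R[X]) [IsLocalization W T] :
    ∃ d : Derivation R T T, ∀ p, d (algebraMap R[X] T p) = algebraMap R[X] T (derivative p) :=
  exists_extend_of_isLocalization W ((Algebra.linearMap R[X] T).compDer derivative')

end Localization

theorem map_mem_of_isLocalization {R S T M : Type*} [CommRing R] [CommRing S] [CommRing T]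
    [Algebra R T] [Algebra S T] [AddCommGroup M] [Module T M] [Module R M]
    (W : Submonoid S) [IsLocalization W T] (d : Derivation R T M) {N : Submodule T M}
    (h : ∀ s, d (algebraMap S T s) ∈ N) (z : T) : d z ∈ N := by
  obtain ⟨⟨s, w⟩, hz⟩ := IsLocalization.surj W z
  have hleib : z • d (algebraMap S T w) + algebraMap S T w • d z = d (algebraMap S T s) := by
    rw [← leibniz, hz]
  refine (N.smul_mem_iff_of_isUnit (IsLocalization.map_units T w)).mp ?_
  rw [show algebraMap S T w • d z = d (algebraMap S T s) - z • d (algebraMap S T w) by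
    rw [← hleib]; abel]
  exact N.sub_mem (h s) (N.smul_mem z (h w))

section Polynomial

variable {R B M : Type*} [CommRing R] [CommRing B] [Algebra R B] [Algebra R[X] B]
  [IsScalarTower R R[X] B] [AddCommGroup M] [Module B M] [Module R M]

theorem map_algebraMap_polynomial (d : Derivation R B M) (p : R[X]) :
    d (algebraMap R[X] B p) = algebraMap R[X] B (derivative p) • d (algebraMap R[X] B X) := by
  simpa [aeval_algebraMap_apply] using d.map_aeval p (algebraMap R[X] B X)

/-- The quotient rule `d (g / h) = W(h, g) / h² dx`. -/
theorem algebraMap_sq_smul_eq_wronskian_smul (d : Derivation R B M) {g h : R[X]} {b : B}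
    (hb : algebraMap R[X] B h * b = algebraMap R[X] B g) :
    algebraMap R[X] B h ^ 2 • d b =
      algebraMap R[X] B (wronskian h g) • d (algebraMap R[X] B X) := by
  have hleib := congrArg d hb
  rw [leibniz, map_algebraMap_polynomial d g, map_algebraMap_polynomial d h] at hleib
  rw [wronskian, map_sub, map_mul, map_mul, ← hb]
  linear_combination (norm := module) algebraMap R[X] B h • hleib

end Polynomial

variable {R A B M : Type*} [CommSemiring R] [CommSemiring A] [CommRing B] [Algebra R B]
  [Algebra A B] [AddCommGroup M] [Module B M] [Module R M] [Module A M] [IsScalarTower A B M]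

def ofMapAlgebraMapEqZero (d : Derivation R B M) (hd : ∀ a, d (algebraMap A B a) = 0) :
    Derivation A B M :=
  mk' { toFun := d
        map_add' := d.map_add
        map_smul' a z := by
          rw [RingHom.id_apply, Algebra.smul_def, leibniz, hd, smul_zero, add_zero,
            algebraMap_smul] }
    d.leibniz

@[simp]
theorem ofMapAlgebraMapEqZero_apply (d : Derivation R B M) (hd : ∀ a, d (algebraMap A B a) = 0)
    (z : B) : d.ofMapAlgebraMapEqZero hd z = d z := rfl

end Derivation

namespace KaehlerDifferential

variable {A B : Type*} [CommRing A] [CommRing B] [Algebra A B]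

theorem ker_toSpanSingleton_D {x : B} {J : Ideal B} (hJ : ∀ j ∈ J, j • D A B x = 0)
    (d : Derivation A B (B ⧸ J)) (hd : d x = 1) :
    LinearMap.ker (LinearMap.toSpanSingleton B Ω[B⁄A] (D A B x)) = J := by
  ext t
  refine ⟨fun ht => ?_, fun ht => hJ t ht⟩
  have := congrArg d.liftKaehlerDifferential (LinearMap.mem_ker.mp ht)
  rw [LinearMap.toSpanSingleton_apply, map_smul, Derivation.liftKaehlerDifferential_comp_D, hd,
    map_zero] at this
  exact Ideal.Quotient.eq_zero_iff_mem.mp (by simpa [Algebra.smul_def] using this)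

theorem length_eq_length_quotient {x : B} (hx : Submodule.span B {D A B x} = ⊤) {J : Ideal B}
    (hJ : ∀ j ∈ J, j • D A B x = 0) (d : Derivation A B (B ⧸ J)) (hd : d x = 1) :
    Module.length B Ω[B⁄A] = Module.length B (B ⧸ J) := by
  have hsurj : Function.Surjective (LinearMap.toSpanSingleton B Ω[B⁄A] (D A B x)) := by
    rw [← LinearMap.range_eq_top, ← LinearMap.span_singleton_eq_range, hx]
  exact ((Submodule.quotEquivOfEq _ _ (ker_toSpanSingleton_D hJ d hd).symm).trans
    (LinearMap.quotKerEquivOfSurjective _ hsurj)).length_eq.symm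

theorem span_D_algebraMap_X_eq_top {R A B : Type*} [CommRing R] [CommRing A] [CommRing B]
    [Algebra R A] [Algebra R B] [Algebra A B] [IsScalarTower R A B] [Algebra R[X] B]
    [IsScalarTower R R[X] B] (W : Submonoid R[X]) [IsLocalization W B] :
    Submodule.span B {D A B (algebraMap R[X] B X)} = ⊤ := by
  rw [eq_top_iff, ← span_range_derivation, Submodule.span_le]
  rintro _ ⟨z, rfl⟩
  refine Derivation.map_mem_of_isLocalization W (D A B) (fun p => ?_) z
  have := ((D A B).restrictScalars R).map_algebraMap_polynomial p
  rw [Derivation.restrictScalars_apply, Derivation.restrictScalars_apply] at this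
  exact this ▸ Submodule.smul_mem _ _ (Submodule.mem_span_singleton_self _)

end KaehlerDifferential

theorem Module.exists_compositionSeries_length_eq {R M : Type*} [Ring R] [AddCommGroup M]
    [Module R M] {n : ℕ} (h : Module.length R M = n) :
    ∃ s : CompositionSeries (Submodule R M), s.head = ⊥ ∧ s.last = ⊤ ∧ s.length = n := by
  have : IsFiniteLength R M := Module.length_ne_top_iff.mp (h ▸ ENat.natCast_ne_top n)
  obtain ⟨s, hhead, hlast⟩ := isFiniteLength_iff_exists_compositionSeries.mp this
  exact ⟨s, hhead, hlast, by exact_mod_cast (Module.length_compositionSeries s hhead hlast).trans h⟩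

section LocalRingAtPoint

variable {k : Type*} [Field k] {B : Type*} [CommRing B] [Algebra k[X] B]

theorem isUnit_algebraMap_of_eval_ne_zero {c : k} [(Ideal.span {X - C c}).IsPrime]
    [IsLocalization.AtPrime B (Ideal.span {X - C c})] {p : k[X]} (hp : p.eval c ≠ 0) :
    IsUnit (algebraMap k[X] B p) :=
  IsLocalization.map_units B (⟨p, by simpa [Ideal.mem_span_singleton, dvd_iff_isRoot]⟩ :
    (Ideal.span {X - C c}).primeCompl)

theorem isDiscreteValuationRing_of_atPrime_X_sub_C [IsDomain B] (c : k)
    [(Ideal.span {X - C c}).IsPrime] [IsLocalization.AtPrime B (Ideal.span {X - C c})] :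
    IsDiscreteValuationRing B :=
  IsLocalization.AtPrime.isDiscreteValuationRing_of_dedekind_domain k[X]
    (Ideal.span_singleton_eq_bot.not.mpr (X_sub_C_ne_zero c)) B

theorem irreducible_algebraMap_X_sub_C (c : k) [(Ideal.span {X - C c}).IsPrime]
    [IsLocalization.AtPrime B (Ideal.span {X - C c})] :
    Irreducible (algebraMap k[X] B (X - C c)) := by
  have := IsLocalization.isDomain_of_atPrime B (Ideal.span {X - C c})
  have := isDiscreteValuationRing_of_atPrime_X_sub_C (B := B) c
  rw [IsDiscreteValuationRing.irreducible_iff_uniformizer,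
    ← IsLocalization.AtPrime.map_eq_maximalIdeal (Ideal.span {(X : k[X]) - C c}), Ideal.map_span,
    Set.image_singleton]

theorem ord_algebraMap_eq_rootMultiplicity (c : k) [(Ideal.span {X - C c}).IsPrime]
    [IsLocalization.AtPrime B (Ideal.span {X - C c})] {p : k[X]} (hp : p ≠ 0) :
    Ring.ord B (algebraMap k[X] B p) = rootMultiplicity c p := by
  have := IsLocalization.isDomain_of_atPrime B (Ideal.span {X - C c})
  have := isDiscreteValuationRing_of_atPrime_X_sub_C (B := B) c
  have hπ := irreducible_algebraMap_X_sub_C (B := B) c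
  conv_lhs => rw [← pow_mul_divByMonic_rootMultiplicity_eq p c, map_mul, map_pow]
  rw [Ring.ord_mul_of_isUnit_right
      (isUnit_algebraMap_of_eval_ne_zero (eval_divByMonic_pow_rootMultiplicity_ne_zero c hp)),
    Ring.ord_pow (mem_nonZeroDivisors_of_ne_zero hπ.ne_zero), Ring.ord_of_irreducible hπ,
    nsmul_one]

end LocalRingAtPoint

open KaehlerDifferential in
theorem length_kaehlerDifferential_eq_rootMultiplicity {k : Type*} [Field k] {c : k}
    {B : Type*} [CommRing B] [Algebra k B] [Algebra k[X] B] [IsScalarTower k k[X] B]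
    [(Ideal.span {X - C c}).IsPrime] [IsLocalization.AtPrime B (Ideal.span {X - C c})]
    {A : Type*} [CommRing A] [Algebra k A] [Algebra k[X] A] [Algebra A B] [IsScalarTower k A B]
    (W : Submonoid k[X]) [IsLocalization W A] {g h : k[X]} (hwr : wronskian h g ≠ 0)
    (hc : h.eval c ≠ 0) {b : B} (hb : algebraMap k[X] B h * b = algebraMap k[X] B g)
    (hAB : ∀ q, algebraMap A B (algebraMap k[X] A q) = aeval b q) :
    Module.length B Ω[B⁄A] = rootMultiplicity c (wronskian h g) := by
  set J : Ideal B := Ideal.span {algebraMap k[X] B (wronskian h g)}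
  have hDb : D A B b = 0 := by
    rw [← aeval_X (R := k) b, ← hAB, Derivation.map_algebraMap]
  have hJ : ∀ j ∈ J, j • D A B (algebraMap k[X] B X) = 0 := by
    intro j hj
    obtain ⟨r, rfl⟩ := Ideal.mem_span_singleton'.mp hj
    have := ((D A B).restrictScalars k).algebraMap_sq_smul_eq_wronskian_smul hb
    rw [Derivation.restrictScalars_apply, Derivation.restrictScalars_apply, hDb, smul_zero]
      at this
    rw [mul_smul, ← this, smul_zero]
  obtain ⟨ddx, hddx⟩ := Derivation.exists_map_algebraMap_eq_derivative (R := k) (T := B)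
    (Ideal.span {X - C c}).primeCompl
  have hddx_X : ddx (algebraMap k[X] B X) = 1 := by rw [hddx, derivative_X, map_one]
  have hddx_b : ddx b ∈ J := by
    have := ddx.algebraMap_sq_smul_eq_wronskian_smul hb
    rw [hddx_X, smul_eq_mul, smul_eq_mul, mul_one] at this
    have hJ_eq : J = Ideal.span {ddx b} := by
      rw [← Ideal.span_singleton_mul_left_unit ((isUnit_algebraMap_of_eval_ne_zero hc).pow 2),
        this]
    exact hJ_eq ▸ Ideal.mem_span_singleton_self _
  have hddx_A : ∀ a : A, ddx (algebraMap A B a) ∈ J := fun a =>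
    Derivation.map_mem_of_isLocalization W (ddx.compAlgebraMap A) (N := J.restrictScalars A)
      (fun q => by
        rw [Derivation.compAlgebraMap_apply, hAB, Derivation.map_aeval]
        exact J.mul_mem_left _ hddx_b) a
  let ddxJ : Derivation A B (B ⧸ J) := (J.mkQ.compDer ddx).ofMapAlgebraMapEqZero fun a => by
    simpa [Ideal.Quotient.eq_zero_iff_mem] using hddx_A a
  calc Module.length B Ω[B⁄A] = Module.length B (B ⧸ J) :=
        length_eq_length_quotient (span_D_algebraMap_X_eq_top (R := k)
          (Ideal.span {X - C c}).primeCompl) hJ ddxJ (by simp [ddxJ, hddx_X])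
    _ = rootMultiplicity c (wronskian h g) := ord_algebraMap_eq_rootMultiplicity c hwr

theorem differential_length_eq_discriminant_multiplicity_general
    (k : Type*) [Field k]
    (g h : k[X])
    (hΔ : h * derivative g - g * derivative h ≠ 0)
    (c : k) (hc : h.eval c ≠ 0)
    (B : Type*) [CommRing B] [Algebra k[X] B]
    [hPc : (Ideal.span {(X : k[X]) - C c}).IsPrime]
    [IsLocalization.AtPrime B (Ideal.span {(X : k[X]) - C c})]
    (A : Type*) [CommRing A] [Algebra k[X] A]
    [hPv : (Ideal.span {(X : k[X]) - C (g.eval c / h.eval c)}).IsPrime]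
    [IsLocalization.AtPrime A (Ideal.span {(X : k[X]) - C (g.eval c / h.eval c)})]
    (b : B) (hb : algebraMap k[X] B h * b = algebraMap k[X] B g)
    [Algebra A B]
    (hAB : ∀ q : k[X], algebraMap A B (algebraMap k[X] A q)
        = Polynomial.eval₂ ((algebraMap k[X] B).comp (Polynomial.C : k →+* k[X])) b q) :
    ∃ s : CompositionSeries (Submodule B (KaehlerDifferential A B)),
      s.head = ⊥ ∧ s.last = ⊤ ∧
      s.length = rootMultiplicity c (h * derivative g - g * derivative h) := by
  let : Algebra k B := ((algebraMap k[X] B).comp C).toAlgebra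
  let : Algebra k A := ((algebraMap k[X] A).comp C).toAlgebra
  have : IsScalarTower k k[X] B := IsScalarTower.of_algebraMap_eq' rfl
  have : IsScalarTower k A B := IsScalarTower.of_algebraMap_eq fun a =>
    ((hAB (C a)).trans (eval₂_C _ _)).symm
  have hwr : h * derivative g - g * derivative h = wronskian h g := by rw [wronskian, mul_comm g]
  rw [hwr] at hΔ ⊢
  exact Module.exists_compositionSeries_length_eq
    (length_kaehlerDifferential_eq_rootMultiplicity
      (Ideal.span {X - C (g.eval c / h.eval c)}).primeCompl hΔ hc hb hAB)

/-- Let `g, h` be coprime polynomials over an algebraically closed field `k` with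
`h·g′ − g·h′ ≠ 0`, and let `c ∈ k` with `h(c) ≠ 0`; set `v = g(c)/h(c)`.  Let `B` be
the localization of `k[x]` at `(x − c)`, let `A` be the localization of `k[y]` at
`(y − v)`, and give `B` the `A`-algebra structure induced by the `k`-algebra map
`k[y] → B` sending `y` to `g/h` (i.e. to the element `b ∈ B` with `h·b = g`).  Then the
length of `Ω_{B/A}` as a `B`-module (expressed via a composition series from `⊥` to
`⊤`) equals the multiplicity of `c` as a root of `h·g′ − g·h′`. -/
theorem differential_length_eq_discriminant_multiplicity
    (k : Type*) [Field k] [IsAlgClosed k]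
    (g h : k[X]) (hgh : IsCoprime g h)
    (hΔ : h * derivative g - g * derivative h ≠ 0)
    (c : k) (hc : h.eval c ≠ 0)
    (B : Type*) [CommRing B] [Algebra k[X] B]
    [hPc : (Ideal.span {(X : k[X]) - C c}).IsPrime]
    [IsLocalization.AtPrime B (Ideal.span {(X : k[X]) - C c})]
    (A : Type*) [CommRing A] [Algebra k[X] A]
    [hPv : (Ideal.span {(X : k[X]) - C (g.eval c / h.eval c)}).IsPrime]
    [IsLocalization.AtPrime A (Ideal.span {(X : k[X]) - C (g.eval c / h.eval c)})]
    (b : B) (hb : algebraMap k[X] B h * b = algebraMap k[X] B g)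
    [Algebra A B]
    (hAB : ∀ q : k[X], algebraMap A B (algebraMap k[X] A q)
        = Polynomial.eval₂ ((algebraMap k[X] B).comp (Polynomial.C : k →+* k[X])) b q) :
    ∃ s : CompositionSeries (Submodule B (KaehlerDifferential A B)),
      s.head = ⊥ ∧ s.last = ⊤ ∧
      s.length = rootMultiplicity c (h * derivative g - g * derivative h) :=
  differential_length_eq_discriminant_multiplicity_general k g h hΔ c hc B (hPc := hPc) A
    (hPv := hPv) b hb hAB
end

section
/- Let k be an algebraically closed field of characteristic p > 2 and for t ∈ k let f_t = x^{p+2} + t·x^p + x ∈ k[x]. If t, t′ ∈ k and there exist a, b, c, e ∈ k with a·e − b·c ≠ 0 such that (a·f_t + b)/(c·f_t + e) = f_{t′} in k(x), then t = t′. -/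
open Polynomial

/-- Members of the family `f_t = x^{p+2} + t·x^p + x` over an algebraically closed
field of characteristic `p > 2` that are related by a fractional linear transformation
of the target are equal: the family is pairwise inequivalent as covers with fixed source. -/
theorem example_family_members_inequivalent
    (k : Type*) [Field k] [IsAlgClosed k] (p : ℕ) (hp : 2 < p) [CharP k p]
    (f : k → RatFunc k)
    (hf : ∀ t : k, f t = algebraMap k[X] (RatFunc k) (X ^ (p + 2) + C t * X ^ p + X))
    (t t' : k) (a b c e : k) (habce : a * e - b * c ≠ 0)
    (heq : (RatFunc.C a * f t + RatFunc.C b) / (RatFunc.C c * f t + RatFunc.C e) = f t') :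
    t = t' := by
  set F : k[X] := X ^ (p + 2) + C t * X ^ p + X with hFdef
  set G : k[X] := X ^ (p + 2) + C t' * X ^ p + X with hGdef
  -- coefficient facts
  have hcoeff : ∀ (s : k) (n : ℕ), (X ^ (p + 2) + C s * X ^ p + X : k[X]).coeff n
      = (if n = p + 2 then 1 else 0) + s * (if n = p then 1 else 0)
        + (if n = 1 then 1 else 0) := by
    intro s n
    simp [coeff_X_pow, coeff_X, eq_comm]
  have hF2 : F.coeff (p + 2) = 1 := by
    rw [hFdef, hcoeff, if_pos rfl, if_neg (by omega), if_neg (by omega)]; ring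
  have hFp : F.coeff p = t := by
    rw [hFdef, hcoeff, if_neg (by omega), if_pos rfl, if_neg (by omega)]; ring
  have hF0 : F.coeff 0 = 0 := by
    rw [hFdef, hcoeff, if_neg (by omega), if_neg (by omega), if_neg (by omega)]; ring
  have hFbig : F.coeff (p + 2 + (p + 2)) = 0 := by
    rw [hFdef, hcoeff, if_neg (by omega), if_neg (by omega), if_neg (by omega)]; ring
  have hG2 : G.coeff (p + 2) = 1 := by
    rw [hGdef, hcoeff, if_pos rfl, if_neg (by omega), if_neg (by omega)]; ring
  have hGp : G.coeff p = t' := by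
    rw [hGdef, hcoeff, if_neg (by omega), if_pos rfl, if_neg (by omega)]; ring
  -- denominator is nonzero
  set D : k[X] := C c * F + C e with hDdef
  have hDne : D ≠ 0 := by
    intro h
    have hc : c = 0 := by
      have := congrArg (fun q => coeff q (p + 2)) h
      simpa [hDdef, coeff_C, hF2, Nat.add_eq_zero] using this
    have he : e = 0 := by
      have := congrArg (fun q => coeff q 0) h
      simpa [hDdef, coeff_C, hF0] using this
    exact habce (by simp [hc, he])
  -- to a polynomial identity
  rw [hf t, hf t'] at heq
  rw [show (RatFunc.C a : RatFunc k) = algebraMap k[X] (RatFunc k) (C a) from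
        (RatFunc.algebraMap_C a).symm,
      show (RatFunc.C b : RatFunc k) = algebraMap k[X] (RatFunc k) (C b) from
        (RatFunc.algebraMap_C b).symm,
      show (RatFunc.C c : RatFunc k) = algebraMap k[X] (RatFunc k) (C c) from
        (RatFunc.algebraMap_C c).symm,
      show (RatFunc.C e : RatFunc k) = algebraMap k[X] (RatFunc k) (C e) from
        (RatFunc.algebraMap_C e).symm,
      ← map_mul, ← map_mul, ← map_add, ← map_add,
      div_eq_iff (RatFunc.algebraMap_ne_zero hDne), ← map_mul] at heq
  have E : C a * F + C b = G * D := RatFunc.algebraMap_injective k heq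
  -- split on c
  by_cases hc : c = 0
  · have he : e ≠ 0 := by
      intro h; exact habce (by simp [hc, h])
    rw [hDdef, hc] at E
    simp only [map_zero, zero_mul, zero_add] at E
    have h2 := congrArg (fun q => coeff q (p + 2)) E
    simp only [coeff_add, coeff_C_mul, coeff_mul_C, hF2, hG2, coeff_C,
      if_neg (by omega : ¬ p + 2 = 0)] at h2
    have hae : a = e := by simpa using h2
    have hpp := congrArg (fun q => coeff q p) E
    simp only [coeff_add, coeff_C_mul, coeff_mul_C, hFp, hGp, coeff_C,
      if_neg (by omega : ¬ p = 0)] at hpp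
    have hkey : e * t = e * t' := by linear_combination hpp - t * hae
    exact mul_left_cancel₀ he hkey
  · exfalso
    have hFdeg : F.natDegree = p + 2 := by
      rw [hFdef]; compute_degree!
    have hGdeg : G.natDegree = p + 2 := by
      rw [hGdef]; compute_degree!
    have hDdeg : D.natDegree = p + 2 := by
      rw [hDdef, natDegree_add_C, natDegree_C_mul hc, hFdeg]
    have hGl : G.leadingCoeff = 1 := by
      rw [leadingCoeff, hGdeg, hG2]
    have hDl : D.leadingCoeff = c := by
      rw [leadingCoeff, hDdeg, hDdef]
      simp [coeff_C, hF2, Nat.add_eq_zero]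
    have hmul := coeff_mul_degree_add_degree G D
    rw [hGdeg, hDdeg, hGl, hDl, one_mul] at hmul
    have hbig := congrArg (fun q => coeff q (p + 2 + (p + 2))) E
    simp only [coeff_add, coeff_C_mul, hmul] at hbig
    rw [hFbig, coeff_C, if_neg (by omega)] at hbig
    exact hc (by simpa using hbig.symm)
end

section
/- Let k be an algebraically closed field of characteristic 3 and let d ≥ 2. Let g, h ∈ k[x] be coprime polynomials with g monic of degree d having zero coefficient in degree d − 1, and h monic of degree d − 1. Suppose the polynomial Δ = h·g′ − g·h′ has degree 2d − 2 and no root of multiplicity ≥ 3. If g₁, h₁ ∈ k[x] are polynomials of degree at most d − 2 satisfying h·g₁′ + g′·h₁ − g·h₁′ − g₁·h′ = 0, then g₁ = 0 and h₁ = 0. -/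
open Polynomial

section Helpers
variable {k : Type*} [Field k] [CharP k 3]

private lemma c3 : (3 : k[X]) = 0 := by
  have h : ((3 : ℕ) : k[X]) = 0 := by
    rw [← Polynomial.C_eq_natCast, show ((3:ℕ) : k) = 0 from CharP.cast_eq_zero k 3, map_zero]
  simpa using h


private lemma d3 (P : k[X]) : derivative (derivative (derivative P)) = 0 := by
  induction P using Polynomial.induction_on' with
  | add p q hp hq => simp [hp, hq]
  | monomial n a =>
    simp only [derivative_monomial]
    have h30 : ((n * (n-1) * (n-1-1) : ℕ) : k) = 0 := by
      apply (CharP.cast_eq_zero_iff k 3 _).2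
      rcases (by omega : n % 3 = 0 ∨ (n-1) % 3 = 0 ∨ (n-1-1) % 3 = 0) with h|h|h
      · exact Dvd.dvd.mul_right (Dvd.dvd.mul_right (Nat.dvd_of_mod_eq_zero h) _) _
      · exact Dvd.dvd.mul_right (Dvd.dvd.mul_left (Nat.dvd_of_mod_eq_zero h) _) _
      · exact Dvd.dvd.mul_left (Nat.dvd_of_mod_eq_zero h) _
    rw [Nat.cast_mul, Nat.cast_mul] at h30
    have hz : a * (n:k) * ((n-1 : ℕ):k) * ((n-1-1 : ℕ):k) = 0 := by
      calc a * (n:k) * ((n-1 : ℕ):k) * ((n-1-1 : ℕ):k)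
          = a * ((n:k) * ((n-1 : ℕ):k) * ((n-1-1 : ℕ):k)) := by ring
        _ = 0 := by rw [h30, mul_zero]
    rw [hz, monomial_zero_right]

private lemma root_cube_dvd {a : k[X]} (ha : derivative a = 0) {t : k} (ht : a.eval t = 0) :
    (X - C t)^3 ∣ a := by
  have hea : expand k 3 (contract 3 a) = a := expand_contract 3 ha (by norm_num)
  have hq : (contract 3 a).eval (t^3) = 0 := by
    have h1 := expand_eval 3 (contract 3 a) t
    rw [hea] at h1
    rw [← h1]; exact ht
  have hdvd : (X - C (t^3)) ∣ contract 3 a := dvd_iff_isRoot.2 hq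
  have h2 := map_dvd (expand k 3) hdvd
  rw [hea] at h2
  have h3 : expand k 3 (X - C (t^3)) = (X - C t)^3 := by
    rw [map_sub, expand_X, expand_C, show (C (t^3) : k[X]) = (C t)^3 by rw [map_pow]]
    linear_combination (X * X * (C t) - X * (C t) * (C t)) * (c3 (k := k))
  rwa [h3] at h2

private lemma three_dvd_natDegree {a : k[X]} (ha : derivative a = 0) : 3 ∣ a.natDegree := by
  have hea : expand k 3 (contract 3 a) = a := expand_contract 3 ha (by norm_num)
  rw [← hea, natDegree_expand]
  exact Dvd.intro_left _ rfl

private lemma locL {g h : k[X]} {t : k}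
    (hΔ3 : ¬ (X - C t)^3 ∣ (h * derivative g - g * derivative h))
    {a b : k[X]} (ha : derivative a = 0) (hb : derivative b = 0)
    (hd : (X - C t)^3 ∣ a * g + b * h) : (X - C t) ∣ a ∧ (X - C t) ∣ b := by
  obtain ⟨q, hq⟩ := hd
  have hd : (X - C t)^3 ∣ a * g + b * h := ⟨q, hq⟩
  have hd' : (X - C t)^3 ∣ a * derivative g + b * derivative h := by
    refine ⟨derivative q, ?_⟩
    have hC3 : (C ((3:ℕ):k) : k[X]) = 0 := by
      rw [show ((3:ℕ):k) = 0 from CharP.cast_eq_zero k 3, map_zero]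
    have h1 := congrArg derivative hq
    simp only [derivative_add, derivative_mul, ha, hb, zero_mul, zero_add,
      derivative_pow, derivative_sub, derivative_X, derivative_C, sub_zero, mul_one,
      hC3, mul_zero, zero_sub, neg_zero] at h1
    linear_combination h1
  have hbΔ : (X - C t)^3 ∣ b * (h * derivative g - g * derivative h) := by
    have heq : b * (h * derivative g - g * derivative h)
        = (a*g + b*h) * derivative g - (a * derivative g + b * derivative h) * g := by ring
    rw [heq]
    exact dvd_sub (hd.mul_right _) (hd'.mul_right _)
  have haΔ : (X - C t)^3 ∣ a * (h * derivative g - g * derivative h) := by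
    have heq : a * (h * derivative g - g * derivative h)
        = (a * derivative g + b * derivative h) * h - (a*g + b*h) * derivative h := by ring
    rw [heq]
    exact dvd_sub (hd'.mul_right _) (hd.mul_right _)
  have hp := prime_X_sub_C (R := k) t
  constructor
  · by_contra hna
    exact hΔ3 (hp.pow_dvd_of_dvd_mul_left 3 hna haΔ)
  · by_contra hnb
    exact hΔ3 (hp.pow_dvd_of_dvd_mul_left 3 hnb hbΔ)

private lemma const_case {d : ℕ} (hd : 2 ≤ d) {g h : k[X]}
    (hgd : g.natDegree = d) (hhd : h.natDegree = d-1)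
    {r a b w : k[X]} (hr0 : r.natDegree = 0) (hr : r ≠ 0)
    (ha : derivative a = 0) (hb : derivative b = 0)
    (heq : r * w = a * g + b * h) (hw : w.degree ≤ ((d-2 : ℕ) : WithBot ℕ)) : w = 0 := by
  by_contra hw0
  have hg0 : g ≠ 0 := by intro hgz; rw [hgz, natDegree_zero] at hgd; omega
  have hh0 : h ≠ 0 := by intro hhz; rw [hhz, natDegree_zero] at hhd; omega
  have hwd : w.natDegree ≤ d - 2 := natDegree_le_iff_degree_le.2 hw
  have hlhs : (r*w).natDegree = w.natDegree := by
    rw [natDegree_mul hr hw0, hr0, zero_add]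
  rw [heq] at hlhs
  by_cases haz : a = 0
  · by_cases hbz : b = 0
    · rw [haz, hbz, zero_mul, zero_mul, add_zero] at heq
      rcases mul_eq_zero.1 heq with h1 | h1
      · exact hr h1
      · exact hw0 h1
    · rw [haz, zero_mul, zero_add, natDegree_mul hbz hh0, hhd] at hlhs
      omega
  · by_cases hbz : b = 0
    · rw [hbz, zero_mul, add_zero, natDegree_mul haz hg0, hgd] at hlhs
      omega
    · have h3a : 3 ∣ a.natDegree := three_dvd_natDegree ha
      have h3b : 3 ∣ b.natDegree := three_dvd_natDegree hb
      have hag : (a*g).natDegree = a.natDegree + d := by rw [natDegree_mul haz hg0, hgd]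
      have hbh : (b*h).natDegree = b.natDegree + (d-1) := by rw [natDegree_mul hbz hh0, hhd]
      have hne : (a*g).natDegree ≠ (b*h).natDegree := by rw [hag, hbh]; omega
      rcases lt_or_gt_of_ne hne with hlt | hlt
      · rw [natDegree_add_eq_right_of_natDegree_lt hlt, hbh] at hlhs
        omega
      · rw [natDegree_add_eq_left_of_natDegree_lt hlt, hag] at hlhs
        omega


private lemma solve_zero [IsAlgClosed k] {d : ℕ} (hd : 2 ≤ d) {g h : k[X]}
    (hgd : g.natDegree = d) (hhd : h.natDegree = d-1)
    (hΔ3 : ∀ t : k, ¬ ((X - C t)^3 ∣ (h * derivative g - g * derivative h))) :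
    ∀ n : ℕ, ∀ r a b w : k[X], r.natDegree ≤ n → r ≠ 0 →
      derivative r = 0 → derivative a = 0 → derivative b = 0 →
      r * w = a * g + b * h → w.degree ≤ ((d-2 : ℕ) : WithBot ℕ) → w = 0 := by
  intro n
  induction n with
  | zero =>
    intro r a b w hrn hr hdr hda hdb heq hw
    exact const_case hd hgd hhd (Nat.le_zero.1 hrn) hr hda hdb heq hw
  | succ n ih =>
    intro r a b w hrn hr hdr hda hdb heq hw
    by_cases hr0 : r.natDegree = 0
    · exact const_case hd hgd hhd hr0 hr hda hdb heq hw
    · -- r has a root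
      obtain ⟨t, ht⟩ := IsAlgClosed.exists_root r (by
        intro hdeg
        exact hr0 (natDegree_eq_zero_iff_degree_le_zero.2 (le_of_eq hdeg)))
      have hrd : (X - C t)^3 ∣ r := root_cube_dvd hdr ht
      have hdsum : (X - C t)^3 ∣ a * g + b * h := heq ▸ hrd.mul_right w
      obtain ⟨hla, hlb⟩ := locL (hΔ3 t) hda hdb hdsum
      have hacube : (X - C t)^3 ∣ a := root_cube_dvd hda (dvd_iff_isRoot.1 hla)
      have hbcube : (X - C t)^3 ∣ b := root_cube_dvd hdb (dvd_iff_isRoot.1 hlb)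
      obtain ⟨r', hr'⟩ := hrd
      obtain ⟨a', ha'⟩ := hacube
      obtain ⟨b', hb'⟩ := hbcube
      have hXne : ((X - C t)^3 : k[X]) ≠ 0 := pow_ne_zero _ (X_sub_C_ne_zero t)
      have hr'ne : r' ≠ 0 := by
        intro h0; rw [h0, mul_zero] at hr'; exact hr hr'
      -- derivative of the cube is zero
      have hdc : derivative ((X - C t)^3 : k[X]) = 0 := by
        have hC3 : (C ((3:ℕ):k) : k[X]) = 0 := by
          rw [show ((3:ℕ):k) = 0 from CharP.cast_eq_zero k 3, map_zero]
        simp only [derivative_pow, derivative_sub, derivative_X, derivative_C, sub_zero, mul_one]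
        rw [hC3, zero_mul]
      have hfac : ∀ p p' : k[X], p = (X - C t)^3 * p' → derivative p = 0 → derivative p' = 0 := by
        intro p p' hp hdp
        have h1 := congrArg derivative hp
        rw [hdp, derivative_mul, hdc, zero_mul, zero_add] at h1
        rcases mul_eq_zero.1 h1.symm with h2 | h2
        · exact absurd h2 hXne
        · exact h2
      have hdr' : derivative r' = 0 := hfac r r' hr' hdr
      have hda' : derivative a' = 0 := hfac a a' ha' hda
      have hdb' : derivative b' = 0 := hfac b b' hb' hdb
      have heq' : r' * w = a' * g + b' * h := by
        have h1 : (X - C t)^3 * (r' * w) = (X - C t)^3 * (a' * g + b' * h) := by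
          rw [← mul_assoc, ← hr']
          rw [heq, ha', hb']; ring
        exact mul_left_cancel₀ hXne h1
      have hdeg : r'.natDegree ≤ n := by
        have h1 : r.natDegree = 3 + r'.natDegree := by
          rw [hr', natDegree_mul hXne hr'ne]
          congr 1
          rw [natDegree_pow, natDegree_X_sub_C]
        omega
      exact ih r' a' b' w hdeg hr'ne hdr' hda' hdb' heq' hw


private lemma dq2 (P Q : k[X]) :
    derivative (derivative P * derivative (derivative Q)
      - derivative (derivative P) * derivative Q) = 0 := by
  have h1 := d3 P; have h2 := d3 Q
  simp only [derivative_sub, derivative_mul, h1, h2, mul_zero, zero_mul, add_zero, zero_add]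
  ring

private lemma dq1 (P Q : k[X]) :
    derivative (-(P * derivative (derivative Q) - derivative (derivative P) * Q)
      + X * (derivative P * derivative (derivative Q)
        - derivative (derivative P) * derivative Q)) = 0 := by
  have h1 := d3 P; have h2 := d3 Q
  simp only [derivative_add, derivative_neg, derivative_sub, derivative_mul, derivative_X,
    h1, h2, mul_zero, zero_mul, add_zero, zero_add, one_mul, mul_one]
  ring

private lemma dq0 (P Q : k[X]) :
    derivative ((P * derivative Q - derivative P * Q)
      - X * (P * derivative (derivative Q) - derivative (derivative P) * Q)
      - X * X * (derivative P * derivative (derivative Q)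
        - derivative (derivative P) * derivative Q)) = 0 := by
  have h1 := d3 P; have h2 := d3 Q
  simp only [derivative_sub, derivative_mul, derivative_X,
    h1, h2, mul_zero, zero_mul, add_zero, zero_add, one_mul, mul_one]
  linear_combination (-(X * (derivative P * derivative (derivative Q)
    - derivative (derivative P) * derivative Q))) * (c3 (k := k))

end Helpers

open Polynomial

/-- Rigidity in characteristic 3: a cover of `ℙ¹` by `ℙ¹` of degree `d`, written as
`g/h` with `g` monic of degree `d` with vanishing coefficient in degree `d−1` and `h`
monic of degree `d−1`, whose discriminant `Δ = h·g′ − g·h′` has degree `2d−2` and no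
root of multiplicity `≥ 3`, admits no nontrivial first-order deformation with the same
discriminant. -/
theorem char_three_rigidity
    (k : Type*) [Field k] [IsAlgClosed k] [CharP k 3]
    (d : ℕ) (hd : 2 ≤ d) (g h : k[X]) (hgh : IsCoprime g h)
    (hgm : g.Monic) (hgd : g.natDegree = d) (hgc : g.coeff (d - 1) = 0)
    (hhm : h.Monic) (hhd : h.natDegree = d - 1)
    (hΔdeg : (h * derivative g - g * derivative h).natDegree = 2 * d - 2)
    (hΔmult : ∀ a : k, rootMultiplicity a (h * derivative g - g * derivative h) < 3)
    (g₁ h₁ : k[X]) (hg₁ : g₁.degree ≤ (d - 2 : ℕ)) (hh₁ : h₁.degree ≤ (d - 2 : ℕ))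
    (hdef : h * derivative g₁ + derivative g * h₁ - g * derivative h₁ - g₁ * derivative h = 0) :
    g₁ = 0 ∧ h₁ = 0 := by
  have hΔne : h * derivative g - g * derivative h ≠ 0 := by
    intro h0
    rw [h0, natDegree_zero] at hΔdeg
    omega
  have hΔ3 : ∀ t : k, ¬ ((X - C t)^3 ∣ (h * derivative g - g * derivative h)) := by
    intro t hdvd
    have h1 : 3 ≤ rootMultiplicity t (h * derivative g - g * derivative h) :=
      (le_rootMultiplicity_iff hΔne).2 hdvd
    have h2 := hΔmult t
    omega
  -- the three differentiated forms of the deformation equation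
  have e0 : h * derivative g₁ + derivative g * h₁ - g * derivative h₁ - g₁ * derivative h
      = 0 := hdef
  have e1 : h * derivative (derivative g₁) + derivative (derivative g) * h₁
      - g * derivative (derivative h₁) - g₁ * derivative (derivative h) = 0 := by
    have h0 := congrArg derivative hdef
    simp only [derivative_add, derivative_sub, derivative_mul, derivative_zero] at h0
    linear_combination h0
  have e2 : derivative h * derivative (derivative g₁) + derivative (derivative g) * derivative h₁
      - derivative g * derivative (derivative h₁)
      - derivative g₁ * derivative (derivative h) = 0 := by
    have h0 := congrArg derivative e1
    simp only [derivative_add, derivative_sub, derivative_mul, derivative_zero,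
      d3, mul_zero, zero_mul, add_zero, zero_add] at h0
    linear_combination h0
  by_cases hr2 : derivative g * derivative (derivative h)
      - derivative (derivative g) * derivative h = 0
  · by_cases hr1 : -(g * derivative (derivative h) - derivative (derivative g) * h)
        + X * (derivative g * derivative (derivative h)
          - derivative (derivative g) * derivative h) = 0
    · by_cases hr0 : (g * derivative h - derivative g * h)
          - X * (g * derivative (derivative h) - derivative (derivative g) * h)
          - X * X * (derivative g * derivative (derivative h)
            - derivative (derivative g) * derivative h) = 0
      · exfalso
        apply hΔne
        linear_combination (-1 : k[X]) * hr0 + X * hr1 + (-2 * (X*X)) * hr2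
      · -- branch J = 0
        constructor
        · refine solve_zero hd hgd hhd hΔ3 _ _
            ((g₁ * derivative h - derivative g₁ * h)
              - X * (g₁ * derivative (derivative h) - derivative (derivative g₁) * h)
              - X * X * (derivative g₁ * derivative (derivative h)
                - derivative (derivative g₁) * derivative h))
            (-((g₁ * derivative g - derivative g₁ * g)
              - X * (g₁ * derivative (derivative g) - derivative (derivative g₁) * g)
              - X * X * (derivative g₁ * derivative (derivative g)
                - derivative (derivative g₁) * derivative g)))
            g₁ le_rfl hr0 (dq0 g h) (dq0 g₁ h) (by rw [derivative_neg, dq0 g₁ g, neg_zero]) ?_ hg₁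
          linear_combination (-X*X*(derivative (derivative g))) * e0 + (X*X*(derivative g)) * e1 + (-X*X*g) * e2
        · refine solve_zero hd hgd hhd hΔ3 _ _
            ((h₁ * derivative h - derivative h₁ * h)
              - X * (h₁ * derivative (derivative h) - derivative (derivative h₁) * h)
              - X * X * (derivative h₁ * derivative (derivative h)
                - derivative (derivative h₁) * derivative h))
            (-((h₁ * derivative g - derivative h₁ * g)
              - X * (h₁ * derivative (derivative g) - derivative (derivative h₁) * g)
              - X * X * (derivative h₁ * derivative (derivative g)
                - derivative (derivative h₁) * derivative g)))
            h₁ le_rfl hr0 (dq0 g h) (dq0 h₁ h) (by rw [derivative_neg, dq0 h₁ g, neg_zero]) ?_ hh₁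
          linear_combination (-X*X*(derivative (derivative h))) * e0 + (X*X*(derivative h)) * e1 + (-X*X*h) * e2
    · -- branch J = 1
      constructor
      · refine solve_zero hd hgd hhd hΔ3 _ _
          (-(g₁ * derivative (derivative h) - derivative (derivative g₁) * h)
            + X * (derivative g₁ * derivative (derivative h)
              - derivative (derivative g₁) * derivative h))
          (-(-(g₁ * derivative (derivative g) - derivative (derivative g₁) * g)
            + X * (derivative g₁ * derivative (derivative g)
              - derivative (derivative g₁) * derivative g)))
          g₁ le_rfl hr1 (dq1 g h) (dq1 g₁ h) (by rw [derivative_neg, dq1 g₁ g, neg_zero]) ?_ hg₁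
        linear_combination (X*(derivative (derivative g))) * e0 + (-X*(derivative g)) * e1 + (X*g) * e2
      · refine solve_zero hd hgd hhd hΔ3 _ _
          (-(h₁ * derivative (derivative h) - derivative (derivative h₁) * h)
            + X * (derivative h₁ * derivative (derivative h)
              - derivative (derivative h₁) * derivative h))
          (-(-(h₁ * derivative (derivative g) - derivative (derivative h₁) * g)
            + X * (derivative h₁ * derivative (derivative g)
              - derivative (derivative h₁) * derivative g)))
          h₁ le_rfl hr1 (dq1 g h) (dq1 h₁ h) (by rw [derivative_neg, dq1 h₁ g, neg_zero]) ?_ hh₁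
        linear_combination (X*(derivative (derivative h))) * e0 + (-X*(derivative h)) * e1 + (X*h) * e2
  · -- branch J = 2
    constructor
    · refine solve_zero hd hgd hhd hΔ3 _ _
        (derivative g₁ * derivative (derivative h) - derivative (derivative g₁) * derivative h)
        (-(derivative g₁ * derivative (derivative g)
          - derivative (derivative g₁) * derivative g))
        g₁ le_rfl hr2 (dq2 g h) (dq2 g₁ h) (by rw [derivative_neg, dq2 g₁ g, neg_zero]) ?_ hg₁
      linear_combination ((derivative (derivative g))) * e0 + (-(derivative g)) * e1 + (g) * e2
    · refine solve_zero hd hgd hhd hΔ3 _ _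
        (derivative h₁ * derivative (derivative h) - derivative (derivative h₁) * derivative h)
        (-(derivative h₁ * derivative (derivative g)
          - derivative (derivative h₁) * derivative g))
        h₁ le_rfl hr2 (dq2 g h) (dq2 h₁ h) (by rw [derivative_neg, dq2 h₁ g, neg_zero]) ?_ hh₁
      linear_combination ((derivative (derivative h))) * e0 + (-(derivative h)) * e1 + (h) * e2
end

section
/- Let k be an algebraically closed field of characteristic 2, write k(x) for the field of rational functions over k, and let k(x²) ⊆ k(x) denote the range of the k-algebra endomorphism of k(x) sending x to x². For a nonzero f ∈ k(x), define T_f : k(x) → k(x) by T_f(q) = q·f′ − f·q′, where ′ denotes the derivative on k(x). Then for every nonzero polynomial f ∈ k[x], the image of T_f equals k(x²), i.e. {q·f′ − f·q′ : q ∈ k(x)} = k(x²). -/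
/-!
Every `r ∈ k(x)` splits as `r = u(x²) + x·v(x²)`: for polynomials sort the monomials by parity,
and `p / q = p q / q²` with `q² ∈ k[x²]` in characteristic 2. Any derivation kills `k(x²)`, since
`D(x²) = 2x·D x = 0`, so `D(u(x²) + x·v(x²)) = v(x²)`. Writing `f = a(x²) + x·b(x²)` and
`q = u(x²) + x·v(x²)`, the cross terms cancel and `T_f(q) = (u b − a v)(x²)`; as `(a, b) ≠ (0, 0)`,
`(u, v) ↦ u b − a v` is onto `k(x)`.
-/

open Polynomial

theorem Polynomial.exists_eq_expand_two_add_X_mul_expand_two {R : Type*} [CommSemiring R]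
    (g : R[X]) : ∃ A B : R[X], g = expand R 2 A + X * expand R 2 B := by
  induction g using Polynomial.recOnHorner with
  | M0 => exact ⟨0, 0, by simp⟩
  | MC p a _ _ ih =>
    obtain ⟨A, B, rfl⟩ := ih
    exact ⟨A + C a, B, by rw [map_add, expand_C]; ring⟩
  | MX p _ ih =>
    obtain ⟨A, B, rfl⟩ := ih
    exact ⟨X * B, A, by rw [map_mul, expand_X]; ring⟩

theorem exists_mul_sub_mul_eq {K : Type*} [Field K] {a b : K} (hab : a ≠ 0 ∨ b ≠ 0) (r : K) :
    ∃ u v : K, u * b - a * v = r := by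
  rcases hab with ha | hb
  · exact ⟨0, -r / a, by field_simp; ring⟩
  · exact ⟨r / b, 0, by field_simp; ring⟩

namespace RatFunc

theorem derivation_algHom_eq_zero {k K : Type*} [Field k] [Field K] [Algebra k K]
    (ψ : RatFunc k →ₐ[k] K) (D : Derivation k K K) (h : D (ψ X) = 0) (r : RatFunc k) :
    D (ψ r) = 0 := by
  have hpoly (p : k[X]) : D (ψ (algebraMap k[X] (RatFunc k) p)) = 0 := by
    rw [← aeval_X_left_eq_algebraMap, ← aeval_algHom_apply, Derivation.map_aeval, h, smul_zero]
  induction r using RatFunc.induction_on with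
  | f p q _ => rw [map_div₀, Derivation.leibniz_div, hpoly, hpoly, smul_zero, smul_zero, sub_zero,
      smul_zero]

section SquareSubstitution

variable {k : Type*} [Field k] (φ : RatFunc k →ₐ[k] RatFunc k)

theorem algHom_algebraMap_eq_expand_two (hφ : φ X = X ^ 2) (p : k[X]) :
    φ (algebraMap k[X] (RatFunc k) p) = algebraMap k[X] (RatFunc k) (expand k 2 p) := by
  rw [← aeval_X_left_eq_algebraMap, ← aeval_algHom_apply, hφ, ← expand_aeval,
    aeval_X_left_eq_algebraMap]

theorem exists_eq_algHom_add_X_mul_algHom [CharP k 2] (hφ : φ X = X ^ 2) (r : RatFunc k) :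
    ∃ u v : RatFunc k, r = φ u + X * φ v := by
  induction r using RatFunc.induction_on with
  | f p q hq =>
    obtain ⟨A, B, hAB⟩ := (p * q).exists_eq_expand_two_add_X_mul_expand_two
    have hq_sq : q ^ 2 = expand k 2 (q.map (frobenius k 2)) := by
      rw [← map_frobenius_expand, map_expand]
    have hq' : algebraMap k[X] (RatFunc k) q ≠ 0 := algebraMap_ne_zero hq
    refine ⟨algebraMap _ _ A / algebraMap _ _ (q.map (frobenius k 2)),
      algebraMap _ _ B / algebraMap _ _ (q.map (frobenius k 2)), ?_⟩
    simp only [map_div₀, algHom_algebraMap_eq_expand_two φ hφ, ← hq_sq, map_pow]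
    have hpq : algebraMap k[X] (RatFunc k) p * algebraMap _ _ q =
        algebraMap _ _ (expand k 2 A) + X * algebraMap _ _ (expand k 2 B) := by
      rw [← map_mul, hAB, map_add, map_mul, algebraMap_X]
    field_simp
    linear_combination hpq

theorem derivation_algHom_add_X_mul_algHom [CharP k 2] (hφ : φ X = X ^ 2)
    (D : Derivation k (RatFunc k) (RatFunc k)) (hD : D X = 1) (u v : RatFunc k) :
    D (φ u + X * φ v) = φ v := by
  have hφD : ∀ r, D (φ r) = 0 := derivation_algHom_eq_zero φ D <| by
    rw [hφ, Derivation.leibniz_pow, two_nsmul, CharTwo.add_self_eq_zero]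
  rw [map_add, hφD, Derivation.leibniz, hφD, hD, smul_eq_mul, smul_eq_mul]
  ring

theorem mul_derivation_sub_mul_derivation_eq_algHom [CharP k 2] (hφ : φ X = X ^ 2)
    (D : Derivation k (RatFunc k) (RatFunc k)) (hD : D X = 1) (a b u v : RatFunc k) :
    (φ u + X * φ v) * D (φ a + X * φ b) - (φ a + X * φ b) * D (φ u + X * φ v) =
      φ (u * b - a * v) := by
  simp only [derivation_algHom_add_X_mul_algHom φ hφ D hD, map_sub, map_mul]
  ring

end SquareSubstitution

end RatFunc

theorem char_two_image_of_Tf_general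
    (k : Type*) [Field k] [CharP k 2]
    (φ : RatFunc k →ₐ[k] RatFunc k) (hφ : φ RatFunc.X = RatFunc.X ^ 2)
    (D : Derivation k (RatFunc k) (RatFunc k)) (hD : D RatFunc.X = 1)
    (f : k[X]) (hf : f ≠ 0) :
    {y : RatFunc k | ∃ q : RatFunc k,
        y = q * D (algebraMap k[X] (RatFunc k) f) - algebraMap k[X] (RatFunc k) f * D q}
      = Set.range φ := by
  obtain ⟨a, b, hf_eq⟩ := RatFunc.exists_eq_algHom_add_X_mul_algHom φ hφ (algebraMap _ _ f)
  have hab : a ≠ 0 ∨ b ≠ 0 := by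
    by_contra! h
    apply RatFunc.algebraMap_ne_zero hf
    rw [hf_eq, h.1, h.2, map_zero, mul_zero, add_zero]
  ext y
  rw [hf_eq]
  constructor
  · rintro ⟨q, rfl⟩
    obtain ⟨u, v, rfl⟩ := RatFunc.exists_eq_algHom_add_X_mul_algHom φ hφ q
    exact ⟨_, (RatFunc.mul_derivation_sub_mul_derivation_eq_algHom φ hφ D hD a b u v).symm⟩
  · rintro ⟨r, rfl⟩
    obtain ⟨u, v, huv⟩ := exists_mul_sub_mul_eq hab r
    exact ⟨φ u + RatFunc.X * φ v, by
      rw [RatFunc.mul_derivation_sub_mul_derivation_eq_algHom φ hφ D hD, huv]⟩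

/-- In characteristic 2, for every nonzero polynomial `f`, the image of the operator
`T_f(q) = q·f′ − f·q′` on `k(x)` is exactly the subfield `k(x²)`, realized as the range
of the `k`-algebra endomorphism of `k(x)` sending `x` to `x²`.  Here the derivative `′`
on `k(x)` is the unique `k`-derivation `D` with `D x = 1`. -/
theorem char_two_image_of_Tf
    (k : Type*) [Field k] [IsAlgClosed k] [CharP k 2]
    (φ : RatFunc k →ₐ[k] RatFunc k) (hφ : φ RatFunc.X = RatFunc.X ^ 2)
    (D : Derivation k (RatFunc k) (RatFunc k)) (hD : D RatFunc.X = 1)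
    (f : k[X]) (hf : f ≠ 0) :
    {y : RatFunc k | ∃ q : RatFunc k,
        y = q * D (algebraMap k[X] (RatFunc k) f) - algebraMap k[X] (RatFunc k) f * D q}
      = Set.range φ :=
  char_two_image_of_Tf_general k φ hφ D hD f hf
end

section
/- Let k be an algebraically closed field of characteristic p > 0, write k(x) for the field of rational functions over k, and let k(x^p) ⊆ k(x) denote the range of the k-algebra endomorphism of k(x) sending x to x^p, so that k(x) is a p-dimensional vector space over k(x^p). Then for every nonzero f ∈ k(x), the image {q·f′ − f·q′ : q ∈ k(x)} of the k(x^p)-linear operator T_f(q) = q·f′ − f·q′ is a k(x^p)-subspace of k(x) of dimension exactly p − 1. -/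
set_option synthInstance.maxHeartbeats 1000000
set_option maxHeartbeats 4000000

open Polynomial

section TfAux

variable {k : Type*} [Field k] {p : ℕ} [CharP k p]

private lemma tf_algebraMap_eq_aeval (P : k[X]) :
    algebraMap k[X] (RatFunc k) P = aeval RatFunc.X P := by
  have h : (IsScalarTower.toAlgHom k k[X] (RatFunc k)) = aeval RatFunc.X := by
    apply Polynomial.algHom_ext
    simp [RatFunc.algebraMap_X]
  exact congrFun (congrArg (fun f => f.toFun) h) P

variable (φ : RatFunc k →ₐ[k] RatFunc k) (D : Derivation k (RatFunc k) (RatFunc k))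

private lemma tf_D_Xp (hp : 0 < p) : D (RatFunc.X ^ p) = 0 := by
  haveI : CharP (RatFunc k) p :=
    charP_of_injective_algebraMap (algebraMap k (RatFunc k)).injective p
  rw [D.leibniz_pow]
  simp only [smul_eq_mul, nsmul_eq_mul]
  rw [CharP.cast_eq_zero, zero_mul]

private lemma tf_D_range (hp : 0 < p) (hφ : φ RatFunc.X = RatFunc.X ^ p) :
    ∀ y ∈ φ.toRingHom.fieldRange, D y = 0 := by
  have hpoly : ∀ P : k[X], D (φ (algebraMap k[X] (RatFunc k) P)) = 0 := by
    intro P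
    rw [tf_algebraMap_eq_aeval, ← Polynomial.aeval_algHom_apply, hφ, D.map_aeval,
      tf_D_Xp D hp, smul_zero]
  rintro y ⟨g, rfl⟩
  show D (φ g) = 0
  rw [← RatFunc.num_div_denom g, map_div₀, D.leibniz_div, hpoly, hpoly]
  simp

end TfAux

/-- In characteristic `p > 0`, for every nonzero `f ∈ k(x)` the image of the
`k(x^p)`-linear operator `T_f(q) = q·f′ − f·q′` is a `k(x^p)`-subspace of `k(x)` of
dimension exactly `p − 1`.  Here `k(x^p)` is the range of the `k`-algebra endomorphism
`φ` of `k(x)` sending `x` to `x^p` (a subfield over which `k(x)` is a vector space),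
and the derivative `′` is the unique `k`-derivation `D` on `k(x)` with `D x = 1`. -/
theorem image_of_Tf_dimension
    (k : Type*) [Field k] [IsAlgClosed k] (p : ℕ) (hp : 0 < p) [CharP k p]
    (φ : RatFunc k →ₐ[k] RatFunc k) (hφ : φ RatFunc.X = RatFunc.X ^ p)
    (D : Derivation k (RatFunc k) (RatFunc k)) (hD : D RatFunc.X = 1)
    (f : RatFunc k) (hf : f ≠ 0) :
    ∃ V : Submodule φ.toRingHom.fieldRange (RatFunc k),
      (V : Set (RatFunc k)) = {y : RatFunc k | ∃ q : RatFunc k, y = q * D f - f * D q} ∧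
      Module.finrank φ.toRingHom.fieldRange V = p - 1 := by
  classical
  set L : Subfield (RatFunc k) := φ.toRingHom.fieldRange with hL
  haveI : NeZero p := ⟨hp.ne'⟩
  haveI hprime : Fact p.Prime := CharP.char_is_prime_of_pos k p
  haveI : CharP (RatFunc k) p :=
    charP_of_injective_algebraMap (algebraMap k (RatFunc k)).injective p
  have hDL : ∀ y ∈ L, D y = 0 := tf_D_range φ D hp hφ
  have halg : ∀ c : ↥L, algebraMap ↥L (RatFunc k) c = (c : RatFunc k) := fun c => rfl
  have hXp_mem : RatFunc.X ^ p ∈ L := ⟨RatFunc.X, hφ⟩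
  have hX_not : RatFunc.X ∉ L := by
    intro h
    have := hDL _ h
    rw [hD] at this
    exact one_ne_zero this
  -- adjoining X to L gives everything
  have hadj : IntermediateField.adjoin ↥L ({RatFunc.X} : Set (RatFunc k)) = ⊤ := by
    rw [eq_top_iff]
    intro q _
    have hP : ∀ P : k[X], algebraMap k[X] (RatFunc k) P ∈
        IntermediateField.adjoin ↥L ({RatFunc.X} : Set (RatFunc k)) := by
      intro P
      induction P using Polynomial.induction_on with
      | C a =>
          rw [RatFunc.algebraMap_C]
          have hc : RatFunc.C a ∈ L := ⟨algebraMap k (RatFunc k) a, by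
            rw [RatFunc.algebraMap_eq_C]; exact φ.commutes a⟩
          exact (IntermediateField.adjoin ↥L ({RatFunc.X} : Set (RatFunc k))).algebraMap_mem ⟨_, hc⟩
      | add P Q hPmem hQmem =>
          rw [map_add]; exact add_mem hPmem hQmem
      | monomial n a ih =>
          have : (C a * X ^ (n + 1) : k[X]) = (C a * X ^ n) * X := by ring
          rw [this, map_mul, RatFunc.algebraMap_X]
          exact mul_mem ih (IntermediateField.subset_adjoin _ _ rfl)
    rw [← RatFunc.num_div_denom q]
    exact div_mem (hP _) (hP _)
  -- X is integral over L
  set cp : ↥L := ⟨RatFunc.X ^ p, hXp_mem⟩ with hcp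
  have heval : aeval (RatFunc.X : RatFunc k) ((X : (↥L)[X]) ^ p - C cp) = 0 := by
    simp [halg, hcp]
  have hint : IsIntegral ↥L (RatFunc.X : RatFunc k) :=
    ⟨(X : (↥L)[X]) ^ p - C cp, monic_X_pow_sub_C cp hp.ne', by
      simpa using heval⟩
  -- the minimal polynomial of X over L has degree p
  have hdeg : (minpoly ↥L (RatFunc.X : RatFunc k)).natDegree = p := by
    set m := minpoly ↥L (RatFunc.X : RatFunc k) with hm
    have hdvd : m ∣ (X : (↥L)[X]) ^ p - C cp := minpoly.dvd _ _ heval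
    have hmap_dvd : m.map (algebraMap ↥L (RatFunc k)) ∣
        ((X : (RatFunc k)[X]) - C RatFunc.X) ^ p := by
      have h1 := Polynomial.map_dvd (algebraMap ↥L (RatFunc k)) hdvd
      rw [Polynomial.map_sub, Polynomial.map_pow, Polynomial.map_X, Polynomial.map_C,
        halg] at h1
      have h2 : ((cp : ↥L) : RatFunc k) = RatFunc.X ^ p := rfl
      rw [h2] at h1
      rwa [sub_pow_char, ← map_pow] 
    obtain ⟨i, hip, hassoc⟩ := (dvd_prime_pow (prime_X_sub_C (RatFunc.X : RatFunc k)) p).1 hmap_dvd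
    have hmmonic : m.Monic := minpoly.monic hint
    have heqmap : m.map (algebraMap ↥L (RatFunc k)) = ((X : (RatFunc k)[X]) - C RatFunc.X) ^ i :=
      eq_of_monic_of_associated (hmmonic.map _) ((monic_X_sub_C _).pow i) hassoc
    have hni : m.natDegree = i := by
      have h2 := congrArg Polynomial.natDegree heqmap
      rwa [hmmonic.natDegree_map, natDegree_pow, natDegree_X_sub_C, mul_one] at h2
    have hpos : 0 < m.natDegree := minpoly.natDegree_pos hint
    rw [hni]
    by_contra hne
    have hlt : i < p := lt_of_le_of_ne hip hne
    -- look at the next coefficient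
    have hnext : algebraMap ↥L (RatFunc k) m.nextCoeff = (i : RatFunc k) * (-RatFunc.X) := by
      have h3 := congrArg Polynomial.nextCoeff heqmap
      rw [nextCoeff_map (algebraMap ↥L (RatFunc k)).injective,
        (monic_X_sub_C RatFunc.X).nextCoeff_pow, nextCoeff_X_sub_C] at h3
      rw [h3, nsmul_eq_mul]
    have hiK : (i : RatFunc k) ≠ 0 := by
      rw [Ne, CharP.cast_eq_zero_iff (RatFunc k) p]
      intro hdvd'
      have : p ≤ i := Nat.le_of_dvd (hni ▸ hpos) hdvd'
      omega
    have hy_mem : (i : RatFunc k) * (-RatFunc.X) ∈ L := by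
      rw [← hnext, halg]; exact (m.nextCoeff : ↥L).2
    have hiL : (i : RatFunc k) ∈ L := ⟨(i : RatFunc k), map_natCast φ.toRingHom i⟩
    have : RatFunc.X ∈ L := by
      have h4 : RatFunc.X = -((i : RatFunc k)⁻¹ * ((i : RatFunc k) * (-RatFunc.X))) := by
        field_simp
      rw [h4]
      exact neg_mem (mul_mem (inv_mem hiL) hy_mem)
    exact hX_not this
  -- finrank of K over L is p
  have e : ↥(IntermediateField.adjoin ↥L ({RatFunc.X} : Set (RatFunc k))) ≃ₐ[↥L] RatFunc k :=
    (IntermediateField.equivOfEq hadj).trans IntermediateField.topEquiv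
  haveI : FiniteDimensional ↥L ↥(IntermediateField.adjoin ↥L ({RatFunc.X} : Set (RatFunc k))) := by
    exact IntermediateField.adjoin.finiteDimensional hint
  haveI hFD : FiniteDimensional ↥L (RatFunc k) :=
    Module.Finite.equiv e.toLinearEquiv
  have hfinrank : Module.finrank ↥L (RatFunc k) = p := by
    rw [← e.toLinearEquiv.finrank_eq, IntermediateField.adjoin.finrank hint, hdeg]
  -- constants of the derivation
  have hkerD : ∀ g : RatFunc k, D g = 0 → g ∈ L := by
    intro g hg
    set Msub : Subalgebra ↥L (RatFunc k) :=
      { carrier := {y | D y = 0}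
        mul_mem' := by
          intro a b ha hb
          simp only [Set.mem_setOf_eq] at *
          rw [D.leibniz, ha, hb, smul_zero, smul_zero, add_zero]
        add_mem' := by
          intro a b ha hb
          simp only [Set.mem_setOf_eq] at *
          rw [map_add, ha, hb, add_zero]
        one_mem' := by
          simp only [Set.mem_setOf_eq]
          exact D.map_one_eq_zero
        zero_mem' := by
          simp only [Set.mem_setOf_eq]
          exact map_zero D
        algebraMap_mem' := by
          intro c
          simp only [Set.mem_setOf_eq]
          exact hDL _ (by rw [halg]; exact c.2) } with hMsub
    set M : IntermediateField ↥L (RatFunc k) := Msub.toIntermediateField (by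
      intro x hx
      have hx' : D x = 0 := hx
      show D x⁻¹ = 0
      rw [D.leibniz_inv, hx', smul_zero]) with hM
    have hMmem : ∀ y : RatFunc k, y ∈ M ↔ D y = 0 := fun _ => Iff.rfl
    clear hM hMsub
    clear_value M Msub
    have hgM : g ∈ M := (hMmem g).2 hg
    haveI : FiniteDimensional ↥L ↥M := inferInstance
    have hmul := Module.finrank_mul_finrank ↥L ↥M (RatFunc k)
    rw [hfinrank] at hmul
    rcases hprime.out.eq_one_or_self_of_dvd _ ⟨_, hmul.symm⟩ with h1 | h1
    · have hbot : M = ⊥ := IntermediateField.finrank_eq_one_iff.1 h1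
      rw [hbot, IntermediateField.mem_bot] at hgM
      obtain ⟨c, hc⟩ := hgM
      rw [← hc, halg]
      exact c.2
    · exfalso
      have h2 : Module.finrank ↥M (RatFunc k) = 1 := by
        rw [h1] at hmul
        exact Nat.eq_of_mul_eq_mul_left hp (by rw [mul_one]; exact hmul)
      have h3 : (⊥ : Subalgebra ↥M (RatFunc k)) = ⊤ :=
        Subalgebra.bot_eq_top_iff_finrank_eq_one.2 h2
      have hXmem : RatFunc.X ∈ (⊥ : Subalgebra ↥M (RatFunc k)) := by
        rw [h3]; exact Algebra.mem_top
      rw [Algebra.mem_bot] at hXmem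
      obtain ⟨c, hc⟩ := hXmem
      have hDX0 : D RatFunc.X = 0 := by
        rw [← hc]
        exact (hMmem _).1 c.2
      rw [hD] at hDX0
      exact one_ne_zero hDX0
  -- the linear operator T_f
  let T : RatFunc k →ₗ[↥L] RatFunc k :=
    { toFun := fun q => q * D f - f * D q
      map_add' := by
        intro a b
        simp only [map_add]
        ring
      map_smul' := by
        intro c q
        have hsc : (c • q : RatFunc k) = (c : RatFunc k) * q := rfl
        have hDc : D (c : RatFunc k) = 0 := hDL _ c.2
        simp only [RingHom.id_apply, hsc]
        rw [D.leibniz, hDc, smul_zero, add_zero, smul_eq_mul]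
        show (c : RatFunc k) * q * D f - f * ((c : RatFunc k) * D q)
            = (c : RatFunc k) * (q * D f - f * D q)
        ring }
  have hTapp : ∀ q, T q = q * D f - f * D q := fun q => rfl
  have hker : LinearMap.ker T = Submodule.span ↥L {f} := by
    apply le_antisymm
    · intro q hq
      rw [LinearMap.mem_ker, hTapp] at hq
      have hq' : q * D f = f * D q := sub_eq_zero.1 hq
      have hDg : D (q / f) = 0 := by
        rw [D.leibniz_div]
        simp only [smul_eq_mul]
        rw [← hq', sub_self, mul_zero]
      have hmem := hkerD _ hDg
      rw [Submodule.mem_span_singleton]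
      refine ⟨⟨q / f, hmem⟩, ?_⟩
      show q / f * f = q
      exact div_mul_cancel₀ _ hf
    · rw [Submodule.span_le, Set.singleton_subset_iff, SetLike.mem_coe,
        LinearMap.mem_ker, hTapp]
      exact sub_self _
  refine ⟨LinearMap.range T, ?_, ?_⟩
  · ext y
    simp only [SetLike.mem_coe, LinearMap.mem_range, Set.mem_setOf_eq, hTapp]
    exact ⟨fun ⟨q, h⟩ => ⟨q, h.symm⟩, fun ⟨q, h⟩ => ⟨q, h.symm⟩⟩
  · have hrn := LinearMap.finrank_range_add_finrank_ker T
    rw [hker, finrank_span_singleton hf, hfinrank] at hrn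
    omega
end

section
/- Let k be an algebraically closed field of characteristic p > 2, write k(x) for the field of rational functions over k, and let k(x^p) ⊆ k(x) denote the range of the k-algebra endomorphism of k(x) sending x to x^p. Let f, g ∈ k(x) be nonzero. If the images of the operators T_f and T_g are equal, i.e. {q·f′ − f·q′ : q ∈ k(x)} = {q·g′ − g·q′ : q ∈ k(x)}, then there exists β ∈ k(x^p) with f = β·g. -/
open Polynomial IntermediateField Module

/-!
Let `K = k(x^p)`, the range of `φ`; then `[k(x) : K] = p` and `D` is `K`-linear.
Since `T_f(s f) = -f² s′` and `T_g(q) = -g² (q/g)′`, equality of the images gives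
`u² · D(k(x)) ⊆ D(k(x))` for `u = f/g`. The elements multiplying the `K`-subspace `D(k(x))`
into itself form a `K`-subalgebra of an extension of prime degree, hence equal `K` or `k(x)`;
the latter would make `D` surjective, impossible for a `K`-linear endomorphism of a
finite-dimensional space that kills `1`. So `u² ∈ K`, and as `u^p ∈ K` with `p` odd, `u ∈ K`.
-/

namespace Submodule

variable {R A : Type*} [CommSemiring R] [Semiring A] [Algebra R A]

def multipliers (M : Submodule R A) : Subalgebra R A where
  carrier := {a | ∀ m ∈ M, a * m ∈ M}
  mul_mem' {a b} ha hb m hm := mul_assoc a b m ▸ ha _ (hb m hm)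
  add_mem' {a b} ha hb m hm := (add_mul a b m).symm ▸ M.add_mem (ha m hm) (hb m hm)
  algebraMap_mem' r m hm := Algebra.smul_def r m ▸ M.smul_mem r hm

end Submodule

namespace Derivation

section Constants

variable {k L : Type*} [Field k] [Field L] [Algebra k L] (D : Derivation k L L)

def constants : IntermediateField k L where
  carrier := {y | D y = 0}
  mul_mem' {a b} ha hb := by simp_all [leibniz]
  add_mem' {a b} ha hb := by simp_all
  algebraMap_mem' := D.map_algebraMap
  inv_mem' a ha := by simp_all [leibniz_inv]

variable {D} in
def ofLEConstants {K : IntermediateField k L} (hK : K ≤ D.constants) : Derivation K L L :=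
  mk' { toFun := D
        map_add' := D.map_add
        map_smul' := fun c y => by
          rw [Algebra.smul_def, leibniz, IntermediateField.algebraMap_apply,
            show D c = 0 from hK c.2]
          simp [Algebra.smul_def] }
    D.leibniz

end Constants

theorem not_surjective {K A : Type*} [Field K] [CommRing A] [Nontrivial A] [Algebra K A]
    [FiniteDimensional K A] (D : Derivation K A A) : ¬ Function.Surjective D := by
  intro hD
  have hinj : Function.Injective (D : A →ₗ[K] A) := LinearMap.injective_iff_surjective.mpr hD
  exact one_ne_zero (hinj (by simp))

theorem mem_range_algebraMap_of_mul_mem_range {K L : Type*} [Field K] [Field L] [Algebra K L]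
    (hp : (finrank K L).Prime) (D : Derivation K L L) (h1 : 1 ∈ Set.range D) {w : L}
    (hw : ∀ s, w * D s ∈ Set.range D) : w ∈ Set.range (algebraMap K L) := by
  let S := (LinearMap.range (D : L →ₗ[K] L)).multipliers
  have hwS : w ∈ S := by
    rintro _ ⟨s, rfl⟩
    exact hw s
  rcases (Subalgebra.isSimpleOrder_of_finrank_prime K L hp).eq_bot_or_eq_top S with h | h
  · exact Algebra.mem_bot.mp (h ▸ hwS)
  · have : FiniteDimensional K L := Module.finite_of_finrank_pos hp.pos
    refine absurd (fun y => ?_) D.not_surjective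
    obtain ⟨x, hx⟩ := h1
    simpa using (h ▸ Algebra.mem_top : y ∈ S) 1 ⟨x, hx⟩

theorem sq_div_mul_mem_range {k L : Type*} [CommRing k] [Field L] [Algebra k L]
    (D : Derivation k L L) {f g : L}
    (him : {y | ∃ q, y = q * D f - f * D q} ⊆ {y | ∃ q, y = q * D g - g * D q}) (s : L) :
    (f / g) ^ 2 * D s ∈ Set.range D := by
  obtain ⟨q, hq⟩ := him ⟨s * f, rfl⟩
  have hq' : g * D q - q * D g = f ^ 2 * D s := by
    rw [leibniz, smul_eq_mul, smul_eq_mul] at hq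
    linear_combination hq
  refine ⟨q / g, ?_⟩
  rw [leibniz_div, smul_eq_mul, smul_eq_mul, smul_eq_mul, hq', div_pow]
  ring

end Derivation

theorem mem_of_sq_mem_of_pow_mem {S L : Type*} [Field L] [SetLike S L] [SubfieldClass S L]
    {s : S} {n : ℕ} (hn : Odd n) {u : L} (h2 : u ^ 2 ∈ s) (hn' : u ^ n ∈ s) : u ∈ s := by
  obtain ⟨m, rfl⟩ := hn
  rcases eq_or_ne u 0 with rfl | hu
  · exact zero_mem s
  · have : u = u ^ (2 * m + 1) / (u ^ 2) ^ m := by field_simp; ring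
    rw [this]
    exact div_mem hn' (pow_mem h2 m)

namespace RatFunc

variable {k L : Type*} [Field k] [Field L] [Algebra k L]

theorem fieldRange_eq_adjoin_X (φ : RatFunc k →ₐ[k] L) : φ.fieldRange = k⟮φ X⟯ := by
  rw [AlgHom.fieldRange_eq_map, ← adjoin_X, adjoin_map, Set.image_singleton]

theorem finrank_adjoin_X_pow (n : ℕ) : finrank k⟮(X : RatFunc k) ^ n⟯ (RatFunc k) = n := by
  have : (X : RatFunc k) ^ n = algebraMap k[X] (RatFunc k) (Polynomial.X ^ n) := by simp
  rw [finrank_eq_max_natDegree, this, num_algebraMap, denom_algebraMap]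
  simp

theorem pow_mem_of_X_pow_mem (p : ℕ) [Fact p.Prime] [CharP k p]
    {E : IntermediateField k (RatFunc k)} (hX : X ^ p ∈ E) (y : RatFunc k) : y ^ p ∈ E := by
  let S := (E.toSubfield.comap (frobenius (RatFunc k) p)).toIntermediateField fun c => by
    show algebraMap k (RatFunc k) c ^ p ∈ E
    exact map_pow (algebraMap k (RatFunc k)) c p ▸ E.algebraMap_mem (c ^ p)
  have : S = ⊤ := by
    rw [eq_top_iff, ← adjoin_X, adjoin_simple_le_iff]
    exact hX
  exact (this ▸ IntermediateField.mem_top : y ∈ S)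

end RatFunc

open RatFunc in
theorem equal_images_implies_proportional_general
    (k : Type*) [Field k] (p : ℕ) (hp : 2 < p) [CharP k p]
    (φ : RatFunc k →ₐ[k] RatFunc k) (hφ : φ RatFunc.X = RatFunc.X ^ p)
    (D : Derivation k (RatFunc k) (RatFunc k)) (hD : D RatFunc.X = 1)
    (f g : RatFunc k) (hg : g ≠ 0)
    (him : {y : RatFunc k | ∃ q : RatFunc k, y = q * D f - f * D q}
         = {y : RatFunc k | ∃ q : RatFunc k, y = q * D g - g * D q}) :
    ∃ β ∈ Set.range φ, f = β * g := by
  have hprime := CharP.char_is_prime_of_two_le k p hp.le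
  have : Fact p.Prime := ⟨hprime⟩
  set K := k⟮(X : RatFunc k) ^ p⟯
  have hrange : Set.range φ = K := by
    rw [← AlgHom.coe_fieldRange, fieldRange_eq_adjoin_X, hφ]
  have hKD : K ≤ D.constants := adjoin_simple_le_iff.mpr <| by
    simp [Derivation.constants, Derivation.leibniz_pow, hD]
  have hu2 : (f / g) ^ 2 ∈ K := by
    obtain ⟨c, hc⟩ := (D.ofLEConstants hKD).mem_range_algebraMap_of_mul_mem_range
      (by rwa [finrank_adjoin_X_pow]) ⟨X, hD⟩ (D.sq_div_mul_mem_range him.subset)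
    exact hc ▸ c.2
  have hu : f / g ∈ K := mem_of_sq_mem_of_pow_mem (hprime.odd_of_ne_two hp.ne') hu2
    (pow_mem_of_X_pow_mem p (mem_adjoin_simple_self k _) _)
  exact ⟨f / g, hrange ▸ hu, (div_mul_cancel₀ f hg).symm⟩

/-- In characteristic `p > 2`, if the operators `T_f(q) = q·f′ − f·q′` and
`T_g(q) = q·g′ − g·q′` on `k(x)` (for nonzero `f, g ∈ k(x)`) have the same image, then
`f = β·g` for some `β` in `k(x^p)`, the range of the `k`-algebra endomorphism of `k(x)`
sending `x` to `x^p`.  The derivative `′` is the unique `k`-derivation `D` on `k(x)`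
with `D x = 1`. -/
theorem equal_images_implies_proportional
    (k : Type*) [Field k] [IsAlgClosed k] (p : ℕ) (hp : 2 < p) [CharP k p]
    (φ : RatFunc k →ₐ[k] RatFunc k) (hφ : φ RatFunc.X = RatFunc.X ^ p)
    (D : Derivation k (RatFunc k) (RatFunc k)) (hD : D RatFunc.X = 1)
    (f g : RatFunc k) (hf : f ≠ 0) (hg : g ≠ 0)
    (him : {y : RatFunc k | ∃ q : RatFunc k, y = q * D f - f * D q}
         = {y : RatFunc k | ∃ q : RatFunc k, y = q * D g - g * D q}) :
    ∃ β ∈ Set.range φ, f = β * g :=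
  equal_images_implies_proportional_general k p hp φ hφ D hD f g hg him
end

section
/- Let k be an algebraically closed field of characteristic 3, write k(x) for the field of rational functions over k, and let k(x³) ⊆ k(x) denote the range of the k-algebra endomorphism of k(x) sending x to x³. Let g, h ∈ k(x) be nonzero and suppose there is no β ∈ k(x³) with g = β·h. Then for q, r ∈ k(x), one has q·g′ − g·q′ = r·h′ − h·r′ if and only if there exist β, γ, δ ∈ k(x³) such that q = β·h + γ·g and r = −β·g + δ·h. -/
/-!
Write `u = q / g`, `v = r / h` and `t = h / g`. Since `q g′ - g q′ = -g² u′`, the equation says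
`u′ = t² v′`. In characteristic 3 the cube of a derivation is again a derivation, and it kills
`x`, so `D³ = 0` on `k(x)`; differentiating `u′ = t² v′` twice then shows that the Wronskian
`u″ t′ - u′ t″` vanishes, i.e. `β = u′ / t′` is a constant. The constants of `D` are exactly
`k(x³)`: a rational function in lowest terms with zero derivative has numerator and denominator
with zero derivative, i.e. in `k[x³]`. As `g` is not a `k(x³)`-multiple of `h`, `t′ ≠ 0`, and
then `γ = u - β t` and `δ = v + β / t` are constants as well.
-/

open Polynomial

namespace Derivation

section FractionRing

variable {R A K : Type*} [CommRing R] [CommRing A] [Field K] [Algebra A K] [Algebra R K]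
  [IsFractionRing A K]

theorem ext_of_fractionRing {D₁ D₂ : Derivation R K K}
    (h : ∀ a : A, D₁ (algebraMap A K a) = D₂ (algebraMap A K a)) : D₁ = D₂ := by
  ext f
  obtain ⟨a, b, -, rfl⟩ := IsFractionRing.div_surjective A f
  simp only [leibniz_div, h]

end FractionRing

-- The Leibniz rule for `D³` has cross terms `3 (D a * D² b + D² a * D b)`, which vanish here.
def cube {R A : Type*} [CommRing R] [CommRing A] [Algebra R A] [CharP A 3]
    (D : Derivation R A A) : Derivation R A A :=
  mk' (D.toLinearMap ∘ₗ D.toLinearMap ∘ₗ D.toLinearMap) fun a b => by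
    have h3 : (3 : A) = 0 := by exact_mod_cast CharP.cast_eq_zero A 3
    simp only [LinearMap.coe_comp, Function.comp_apply, coeFn_coe, leibniz, smul_eq_mul, map_add]
    linear_combination (D a * D (D b) + D (D a) * D b) * h3

@[simp]
theorem cube_apply {R A : Type*} [CommRing R] [CommRing A] [Algebra R A] [CharP A 3]
    (D : Derivation R A A) (a : A) : D.cube a = D (D (D a)) :=
  rfl

end Derivation

namespace RatFunc

variable {k : Type*} [Field k]

theorem derivation_ext {D₁ D₂ : Derivation k (RatFunc k) (RatFunc k)} (h : D₁ X = D₂ X) :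
    D₁ = D₂ := by
  refine Derivation.ext_of_fractionRing (A := k[X]) fun P => ?_
  have : D₁.compAlgebraMap k[X] = D₂.compAlgebraMap k[X] :=
    Polynomial.derivation_ext (by simpa [algebraMap_X] using h)
  simpa using congr($this P)

theorem derivation_apply_algebraMap {D : Derivation k (RatFunc k) (RatFunc k)} (hD : D X = 1)
    (P : k[X]) :
    D (algebraMap k[X] (RatFunc k) P) = algebraMap k[X] (RatFunc k) (derivative P) := by
  have : D.compAlgebraMap k[X] = mkDerivation k 1 :=
    Polynomial.derivation_ext (by simp [algebraMap_X, hD])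
  simpa [mkDerivation_apply, Algebra.smul_def] using congr($this P)

theorem derivation_cube_eq_zero [CharP k 3] {D : Derivation k (RatFunc k) (RatFunc k)}
    (hD : D X = 1) : D.cube = 0 :=
  derivation_ext (by simp [hD])

variable {p : ℕ} {φ : RatFunc k →ₐ[k] RatFunc k}

theorem algHom_algebraMap_of_map_X (hφ : φ X = X ^ p) (P : k[X]) :
    φ (algebraMap k[X] (RatFunc k) P) = algebraMap k[X] (RatFunc k) (expand k p P) := by
  have : φ.comp (IsScalarTower.toAlgHom k k[X] (RatFunc k)) =
      (IsScalarTower.toAlgHom k k[X] (RatFunc k)).comp (expand k p) :=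
    Polynomial.algHom_ext (by simp [algebraMap_X, hφ])
  simpa using congr($this P)

theorem derivation_algHom_eq_zero_s12 [CharP k p] {D : Derivation k (RatFunc k) (RatFunc k)}
    (hD : D X = 1) (hφ : φ X = X ^ p) (f : RatFunc k) : D (φ f) = 0 := by
  obtain ⟨a, b, -, rfl⟩ := IsFractionRing.div_surjective k[X] f
  have hexp (P : k[X]) : D (φ (algebraMap k[X] (RatFunc k) P)) = 0 := by
    rw [algHom_algebraMap_of_map_X hφ, derivation_apply_algebraMap hD, derivative_expand,
      CharP.cast_eq_zero, zero_mul, mul_zero, map_zero]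
  rw [map_div₀, Derivation.leibniz_div, hexp, hexp, smul_zero, smul_zero, sub_zero, smul_zero]

theorem mem_range_of_derivation_eq_zero [CharP k p] [NeZero p]
    {D : Derivation k (RatFunc k) (RatFunc k)} (hD : D X = 1) (hφ : φ X = X ^ p)
    {f : RatFunc k} (hf : D f = 0) : f ∈ Set.range φ := by
  have hw : wronskian f.num f.denom = 0 := by
    apply IsFractionRing.injective k[X] (RatFunc k)
    have := D.leibniz_div (algebraMap k[X] (RatFunc k) f.num) (algebraMap k[X] (RatFunc k) f.denom)
    rw [num_div_denom, hf, derivation_apply_algebraMap hD,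
      derivation_apply_algebraMap hD, smul_eq_mul, smul_eq_mul, smul_eq_mul] at this
    rw [wronskian, map_sub, map_mul, map_mul, map_zero]
    have hden : (algebraMap k[X] (RatFunc k) f.denom)⁻¹ ^ 2 ≠ 0 := by simpa using denom_ne_zero f
    linear_combination -(mul_eq_zero.1 this.symm).resolve_left hden
  obtain ⟨hnum, hdenom⟩ := (isCoprime_num_denom f).wronskian_eq_zero_iff.1 hw
  refine ⟨algebraMap k[X] (RatFunc k) (contract p f.num) /
    algebraMap k[X] (RatFunc k) (contract p f.denom), ?_⟩
  rw [map_div₀, algHom_algebraMap_of_map_X hφ, algHom_algebraMap_of_map_X hφ,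
    expand_contract p hnum (NeZero.ne p), expand_contract p hdenom (NeZero.ne p), num_div_denom]

theorem mem_range_iff_derivation_eq_zero [CharP k p] [NeZero p]
    {D : Derivation k (RatFunc k) (RatFunc k)} (hD : D X = 1) (hφ : φ X = X ^ p)
    (f : RatFunc k) : f ∈ Set.range φ ↔ D f = 0 :=
  ⟨by rintro ⟨f, rfl⟩; exact derivation_algHom_eq_zero_s12 hD hφ f,
    mem_range_of_derivation_eq_zero hD hφ⟩

end RatFunc

namespace Derivation

variable {R K : Type*} [CommRing R] [Field K] [Algebra R K] (D : Derivation R K K)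

theorem sq_mul_apply_div {g : K} (hg : g ≠ 0) (q : K) :
    g ^ 2 * D (q / g) = g * D q - q * D g := by
  rw [leibniz_div, smul_eq_mul, smul_eq_mul, smul_eq_mul]
  field_simp

variable [CharP K 3] (hD3 : D.cube = 0)
include hD3

theorem apply_div_apply_eq_zero {t u v : K} (h : D u = t ^ 2 * D v) : D (D u / D t) = 0 := by
  have h3 : (3 : K) = 0 := by exact_mod_cast CharP.cast_eq_zero K 3
  have hD3' (f : K) : D (D (D f)) = 0 := by simpa using congr($hD3 f)
  rw [sq] at h
  have h' := congr(D $h)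
  have h'' := congr(D (D $h))
  simp only [leibniz, smul_eq_mul, map_add, hD3'] at h' h''
  rw [leibniz_div, smul_eq_mul, smul_eq_mul, smul_eq_mul]
  refine mul_eq_zero_of_right _ ?_
  linear_combination D t * h' - D (D t) * h - t * h''
    - t ^ 2 * (D t * D (D v) + D (D t) * D v) * h3

theorem exists_of_apply_eq_sq_mul {t u v : K} (ht : D t ≠ 0) (h : D u = t ^ 2 * D v) :
    ∃ β, D β = 0 ∧ D (u - β * t) = 0 ∧ D (v + β / t) = 0 := by
  have ht0 : t ≠ 0 := by rintro rfl; exact ht (map_zero D)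
  have hβ := apply_div_apply_eq_zero D hD3 h
  refine ⟨D u / D t, hβ, ?_, ?_⟩
  · rw [map_sub, leibniz, hβ, smul_zero, add_zero, smul_eq_mul, div_mul_cancel₀ _ ht, sub_self]
  · rw [map_add, leibniz_div, hβ, smul_eq_mul, smul_eq_mul, smul_eq_mul, h]
    field_simp
    ring

theorem mul_apply_sub_mul_apply_eq_iff {g h : K} (hg : g ≠ 0) (hh : h ≠ 0) (hgh : D (h / g) ≠ 0)
    (q r : K) :
    q * D g - g * D q = r * D h - h * D r ↔
      ∃ β, D β = 0 ∧ ∃ γ, D γ = 0 ∧ ∃ δ, D δ = 0 ∧ q = β * h + γ * g ∧ r = -(β * g) + δ * h := by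
  constructor
  · intro hqr
    have hq := sq_mul_apply_div D hg q
    have hr := sq_mul_apply_div D hh r
    have : D (q / g) = (h / g) ^ 2 * D (r / h) := by
      rw [div_pow, div_mul_eq_mul_div, eq_div_iff (pow_ne_zero 2 hg)]
      linear_combination hq - hr - hqr
    obtain ⟨β, hβ, hγ, hδ⟩ := exists_of_apply_eq_sq_mul D hD3 hgh this
    refine ⟨β, hβ, _, hγ, _, hδ, ?_, ?_⟩ <;> field_simp <;> ring
  · rintro ⟨β, hβ, γ, hγ, δ, hδ, rfl, rfl⟩
    simp only [map_add, map_neg, leibniz, smul_eq_mul, hβ, hγ, hδ]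
    ring

end Derivation

theorem char_three_Tg_eq_Th_iff_general
    (k : Type*) [Field k] [CharP k 3]
    (φ : RatFunc k →ₐ[k] RatFunc k) (hφ : φ RatFunc.X = RatFunc.X ^ 3)
    (D : Derivation k (RatFunc k) (RatFunc k)) (hD : D RatFunc.X = 1)
    (g h : RatFunc k) (hg : g ≠ 0) (hh : h ≠ 0)
    (hprop : ¬ ∃ β ∈ Set.range φ, g = β * h) (q r : RatFunc k) :
    q * D g - g * D q = r * D h - h * D r ↔
      ∃ β ∈ Set.range φ, ∃ γ ∈ Set.range φ, ∃ δ ∈ Set.range φ,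
        q = β * h + γ * g ∧ r = -(β * g) + δ * h := by
  have hrange := RatFunc.mem_range_iff_derivation_eq_zero hD hφ
  have hgh : D (h / g) ≠ 0 := fun h0 => hprop <| by
    obtain ⟨w, hw⟩ := (hrange _).2 h0
    exact ⟨φ w⁻¹, ⟨_, rfl⟩, by rw [map_inv₀, hw, inv_div, div_mul_cancel₀ g hh]⟩
  simp only [hrange]
  exact D.mul_apply_sub_mul_apply_eq_iff (RatFunc.derivation_cube_eq_zero hD) hg hh hgh q r

/-- In characteristic 3, for nonzero `g, h ∈ k(x)` that are not `k(x³)`-multiples of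
one another, `T_g(q) = T_h(r)` (where `T_f(q) = q·f′ − f·q′`) holds iff
`q = β·h + γ·g` and `r = −β·g + δ·h` for some `β, γ, δ ∈ k(x³)`.  Here `k(x³)` is the
range of the `k`-algebra endomorphism of `k(x)` sending `x` to `x³`, and the
derivative `′` is the unique `k`-derivation `D` on `k(x)` with `D x = 1`. -/
theorem char_three_Tg_eq_Th_iff
    (k : Type*) [Field k] [IsAlgClosed k] [CharP k 3]
    (φ : RatFunc k →ₐ[k] RatFunc k) (hφ : φ RatFunc.X = RatFunc.X ^ 3)
    (D : Derivation k (RatFunc k) (RatFunc k)) (hD : D RatFunc.X = 1)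
    (g h : RatFunc k) (hg : g ≠ 0) (hh : h ≠ 0)
    (hprop : ¬ ∃ β ∈ Set.range φ, g = β * h) (q r : RatFunc k) :
    q * D g - g * D q = r * D h - h * D r ↔
      ∃ β ∈ Set.range φ, ∃ γ ∈ Set.range φ, ∃ δ ∈ Set.range φ,
        q = β * h + γ * g ∧ r = -(β * g) + δ * h :=
  char_three_Tg_eq_Th_iff_general k φ hφ D hD g h hg hh hprop q r
end

section
/- Let k be an algebraically closed field of characteristic p > 0, let d be a positive integer, let n ≤ 3, let c₁, ..., c_n ∈ k be distinct, and let l₁, ..., l_n be positive integers with l_i < p for every i and l₁ + ... + l_n = 2d − 2. Then there are finitely many rational functions f₁, ..., f_m ∈ k(x) such that: for every pair of coprime polynomials g, h ∈ k[x] with max(deg g, deg h) = d and h·g′ − g·h′ = λ·∏_{i=1}^{n}(x − c_i)^{l_i} for some nonzero λ ∈ k, there exist an index j and a, b, c, e ∈ k with a·e − b·c ≠ 0 such that g/h = (a·f_j + b)/(c·f_j + e) in k(x). In other words, there are only finitely many equivalence classes of degree d covers P¹ → P¹ with ramification locus {c₁, ..., c_n} and differential length l_i at each c_i. -/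
open Polynomial

namespace ThreePointAux
variable {k : Type*} [Field k]





/-- proportionality from vanishing 2×2 determinant of nonzero vectors -/
lemma prop_of_det_zero {a b a' b' : k} (h1 : ¬(a = 0 ∧ b = 0)) (h2 : ¬(a' = 0 ∧ b' = 0))
    (hdet : a * b' - a' * b = 0) : ∃ t : k, t ≠ 0 ∧ a' = t * a ∧ b' = t * b := by
  by_cases ha : a = 0
  · have hb : b ≠ 0 := fun hb => h1 ⟨ha, hb⟩
    have ha' : a' = 0 := by
      have h3 : a' * b = 0 := by linear_combination (-1 : k) * hdet + b' * ha
      exact (mul_eq_zero.mp h3).resolve_right hb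
    have hb' : b' ≠ 0 := fun hb' => h2 ⟨ha', hb'⟩
    exact ⟨b' / b, div_ne_zero hb' hb, by rw [ha, ha', mul_zero], by field_simp⟩
  · have ha' : a' ≠ 0 := by
      intro ha'0
      have hb' : b' = 0 := by
        have h3 : a * b' = 0 := by linear_combination hdet + b * ha'0
        exact (mul_eq_zero.mp h3).resolve_left ha
      exact h2 ⟨ha'0, hb'⟩
    refine ⟨a' / a, div_ne_zero ha' ha, by field_simp, ?_⟩
    rw [div_mul_eq_mul_div, eq_div_iff ha]
    linear_combination hdet

/-- Möbius-type relation between pairs of polynomials. -/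
def Rel (g h g' h' : k[X]) : Prop :=
  ∃ a b cc e : k, a * e - b * cc ≠ 0 ∧ g = C a * g' + C b * h' ∧ h = C cc * g' + C e * h'

lemma combo_comp {z w s t : k[X]} {a' b' c' d' p q : k}
    (hz : z = C a' * s + C b' * t) (hw : w = C c' * s + C d' * t) :
    C p * z + C q * w = C (p * a' + q * c') * s + C (p * b' + q * d') * t := by
  rw [hz, hw]; simp only [C_add, C_mul]; ring

lemma Rel.trans {x y z w s t : k[X]} (h1 : Rel x y z w) (h2 : Rel z w s t) : Rel x y s t := by
  obtain ⟨a, b, cc, e, hdet, hx, hy⟩ := h1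
  obtain ⟨a', b', c', d', hdet', hz, hw⟩ := h2
  refine ⟨a * a' + b * c', a * b' + b * d', cc * a' + e * c', cc * b' + e * d', ?_, ?_, ?_⟩
  · have : (a * a' + b * c') * (cc * b' + e * d') - (a * b' + b * d') * (cc * a' + e * c')
        = (a * e - b * cc) * (a' * d' - b' * c') := by ring
    rw [this]; exact mul_ne_zero hdet hdet'
  · rw [hx]; exact combo_comp hz hw
  · rw [hy]; exact combo_comp hz hw

lemma Rel.symm {x y z w : k[X]} (h1 : Rel x y z w) : Rel z w x y := by
  obtain ⟨a, b, cc, e, hdet, hx, hy⟩ := h1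
  refine ⟨e * (a * e - b * cc)⁻¹, -(b * (a * e - b * cc)⁻¹),
    -(cc * (a * e - b * cc)⁻¹), a * (a * e - b * cc)⁻¹, ?_, ?_, ?_⟩
  · have : e * (a * e - b * cc)⁻¹ * (a * (a * e - b * cc)⁻¹)
        - -(b * (a * e - b * cc)⁻¹) * -(cc * (a * e - b * cc)⁻¹) = (a * e - b * cc)⁻¹ := by
      linear_combination (a * e - b * cc)⁻¹ * mul_inv_cancel₀ hdet
    rw [this]; exact inv_ne_zero hdet
  · rw [combo_comp hx hy,
      show e * (a * e - b * cc)⁻¹ * a + -(b * (a * e - b * cc)⁻¹) * cc = 1 by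
        linear_combination mul_inv_cancel₀ hdet,
      show e * (a * e - b * cc)⁻¹ * b + -(b * (a * e - b * cc)⁻¹) * e = 0 by ring]
    simp
  · rw [combo_comp hx hy,
      show -(cc * (a * e - b * cc)⁻¹) * a + a * (a * e - b * cc)⁻¹ * cc = 0 by ring,
      show -(cc * (a * e - b * cc)⁻¹) * b + a * (a * e - b * cc)⁻¹ * e = 1 by
        linear_combination mul_inv_cancel₀ hdet]
    simp

lemma coprime_combo {g h : k[X]} (hco : IsCoprime g h) {A B C' D : k}
    (hdet : A * D - B * C' ≠ 0) :
    IsCoprime (C A * g + C B * h) (C C' * g + C D * h) := by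
  obtain ⟨s, t, hst⟩ := hco
  refine ⟨C (A * D - B * C')⁻¹ * (C D * s - C C' * t),
    C (A * D - B * C')⁻¹ * (C A * t - C B * s), ?_⟩
  have h1 : (C D * s - C C' * t) * (C A * g + C B * h)
      + (C A * t - C B * s) * (C C' * g + C D * h)
      = C (A * D - B * C') * (s * g + t * h) := by
    simp only [C_sub, C_mul]; ring
  have h2 : C (A * D - B * C')⁻¹ * (C D * s - C C' * t) * (C A * g + C B * h)
      + C (A * D - B * C')⁻¹ * (C A * t - C B * s) * (C C' * g + C D * h)
      = C (A * D - B * C')⁻¹ * ((C D * s - C C' * t) * (C A * g + C B * h)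
        + (C A * t - C B * s) * (C C' * g + C D * h)) := by ring
  rw [h2, h1, hst, mul_one, ← C_mul, inv_mul_cancel₀ hdet, C_1]

lemma deg_clash {w : k[X]} (hw : w ≠ 0) {d e e' : ℕ} {c c' : k} (hcc : c ≠ c')
    (h1 : (X - C c) ^ e ∣ w) (h2 : (X - C c') ^ e' ∣ w) (hdeg : w.natDegree ≤ d)
    (hlt : d < e + e') : False := by
  have hcop : IsCoprime ((X - C c) ^ e) ((X - C c') ^ e') :=
    (isCoprime_X_sub_C_of_isUnit_sub ((sub_ne_zero.mpr hcc).isUnit)).pow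
  have hdvd : (X - C c) ^ e * (X - C c') ^ e' ∣ w := hcop.mul_dvd h1 h2
  have hle := natDegree_le_of_dvd hdvd hw
  rw [natDegree_mul (pow_ne_zero _ (X_sub_C_ne_zero c)) (pow_ne_zero _ (X_sub_C_ne_zero c')),
    natDegree_pow, natDegree_pow, natDegree_X_sub_C, natDegree_X_sub_C] at hle
  omega





lemma stepA' (p : ℕ) [CharP k p] {g h R : k[X]} {cpt lam : k} {l : ℕ}
    (hW : h * derivative g - g * derivative h = C lam * (X - C cpt) ^ l * R)
    (hR : R.eval cpt ≠ 0) (hl0 : 0 < l) (hlp : l < p)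
    (hhc : h.eval cpt ≠ 0) (hy0 : C (h.eval cpt) * g - C (g.eval cpt) * h ≠ 0) :
    (X - C cpt) ^ (l + 1) ∣ C (h.eval cpt) * g - C (g.eval cpt) * h := by
  set y := C (h.eval cpt) * g - C (g.eval cpt) * h with hy
  have hyc : y.eval cpt = 0 := by simp [hy]; ring
  obtain ⟨z, hz, hznd⟩ := y.exists_eq_pow_rootMultiplicity_mul_and_not_dvd hy0 cpt
  set b := rootMultiplicity cpt y with hb
  have hbpos : 0 < b := (rootMultiplicity_pos hy0).mpr hyc
  have hzc : z.eval cpt ≠ 0 := fun h0 => hznd (dvd_iff_isRoot.mpr h0)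
  have hQ : h * derivative y - y * derivative h
      = C (h.eval cpt) * (C lam * (X - C cpt) ^ l * R) := by
    rw [← hW, hy]
    simp only [derivative_sub, derivative_C_mul]
    ring
  by_contra hnd
  have hble : b ≤ l := by
    by_contra hgt
    push_neg at hgt
    exact hnd (dvd_trans (pow_dvd_pow _ hgt) (hz ▸ dvd_mul_right _ _))
  have hbk : (b : k) ≠ 0 := by
    rw [Ne, CharP.cast_eq_zero_iff k p]
    intro hdvd
    have := Nat.le_of_dvd hbpos hdvd
    omega
  have hpow : (X - C cpt) ^ b = (X - C cpt) ^ (b - 1) * (X - C cpt) := by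
    rw [← pow_succ]
    congr 1
    omega
  have hder : derivative y = C (b : k) * (X - C cpt) ^ (b - 1) * z
      + (X - C cpt) ^ b * derivative z := by
    rw [hz, derivative_mul, derivative_pow, derivative_X_sub_C, mul_one]
  have hQ2 : h * derivative y - y * derivative h
      = (X - C cpt) ^ (b - 1)
        * (C (b : k) * h * z + (X - C cpt) * (h * derivative z - z * derivative h)) := by
    rw [hder, hz, hpow]
    ring
  have hdvdQ : (X - C cpt) ^ b ∣ (X - C cpt) ^ (b - 1)
      * (C (b : k) * h * z + (X - C cpt) * (h * derivative z - z * derivative h)) := by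
    rw [← hQ2, hQ]
    exact (((pow_dvd_pow _ hble).mul_left (C lam)).mul_right R).mul_left (C (h.eval cpt))
  rw [hpow] at hdvdQ
  have hdvdB : (X - C cpt) ∣
      (C (b : k) * h * z + (X - C cpt) * (h * derivative z - z * derivative h)) :=
    (mul_dvd_mul_iff_left (pow_ne_zero _ (X_sub_C_ne_zero cpt))).mp hdvdQ
  have hevalB := dvd_iff_isRoot.mp hdvdB
  simp only [IsRoot.def, eval_add, eval_mul, eval_C, eval_sub, eval_X, sub_self, zero_mul,
    add_zero] at hevalB
  exact (mul_ne_zero (mul_ne_zero hbk hhc) hzc) hevalB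

lemma stepA (p : ℕ) [CharP k p] {g h R : k[X]} {cpt lam : k} {l : ℕ}
    (hco : IsCoprime g h)
    (hW : h * derivative g - g * derivative h = C lam * (X - C cpt) ^ l * R)
    (hlam : lam ≠ 0) (hR : R.eval cpt ≠ 0) (hl0 : 0 < l) (hlp : l < p) :
    ((X - C cpt) ^ (l + 1) ∣ C (h.eval cpt) * g - C (g.eval cpt) * h)
      ∧ (C (h.eval cpt) * g - C (g.eval cpt) * h ≠ 0)
      ∧ ¬(h.eval cpt = 0 ∧ g.eval cpt = 0) := by
  have hRne : R ≠ 0 := fun h0 => hR (by rw [h0, eval_zero])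
  have hvec : ¬(h.eval cpt = 0 ∧ g.eval cpt = 0) := by
    rintro ⟨h1, h2⟩
    obtain ⟨s, t, hst⟩ := hco
    have := congrArg (eval cpt) hst
    simp [h1, h2] at this
  have hWne : h * derivative g - g * derivative h ≠ 0 := by
    rw [hW]
    exact mul_ne_zero (mul_ne_zero (by simpa using hlam)
      (pow_ne_zero _ (X_sub_C_ne_zero cpt))) hRne
  have hwne : C (h.eval cpt) * g - C (g.eval cpt) * h ≠ 0 := by
    intro hw0
    rw [sub_eq_zero] at hw0
    by_cases hhc : h.eval cpt = 0
    · have hgc : g.eval cpt ≠ 0 := fun hg0 => hvec ⟨hhc, hg0⟩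
      have hh0 : h = 0 := by
        have : C (g.eval cpt) * h = 0 := by rw [← hw0, hhc]; simp
        rcases mul_eq_zero.mp this with h' | h'
        · exact absurd (by simpa using h' : g.eval cpt = 0) hgc
        · exact h'
      rw [hh0] at hWne
      simp at hWne
    · have hg_eq : g = h * C (g.eval cpt / h.eval cpt) := by
        apply mul_left_cancel₀ (show C (h.eval cpt) ≠ 0 from fun h0 => hhc (by simpa using h0))
        rw [hw0, mul_comm h _, ← mul_assoc, ← C_mul]
        congr 1
        field_simp
      have hdvd : h ∣ g := ⟨C (g.eval cpt / h.eval cpt), hg_eq⟩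
      have hu : IsUnit h := hco.isUnit_of_dvd' hdvd dvd_rfl
      obtain ⟨r, hr, hCr⟩ := Polynomial.isUnit_iff.mp hu
      have hdh : derivative h = 0 := by rw [← hCr]; simp
      have hdg : derivative g = 0 := by
        rw [hg_eq, ← hCr, ← C_mul]
        simp
      rw [hdg, hdh] at hWne
      simp at hWne
  refine ⟨?_, hwne, hvec⟩
  by_cases hhc : h.eval cpt = 0
  · have hgc : g.eval cpt ≠ 0 := fun hg0 => hvec ⟨hhc, hg0⟩
    have hW' : g * derivative h - h * derivative g = C (-lam) * (X - C cpt) ^ l * R := by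
      rw [C_neg]
      linear_combination (-1 : k[X]) * hW
    have hy0' : C (g.eval cpt) * h - C (h.eval cpt) * g ≠ 0 := by
      intro h0
      apply hwne
      have : C (h.eval cpt) * g - C (g.eval cpt) * h
          = -(C (g.eval cpt) * h - C (h.eval cpt) * g) := by ring
      rw [this, h0, neg_zero]
    have := stepA' p hW' hR hl0 hlp hgc hy0'
    have heq : C (g.eval cpt) * h - C (h.eval cpt) * g
        = -(C (h.eval cpt) * g - C (g.eval cpt) * h) := by ring
    rw [heq] at this
    exact dvd_neg.mp this
  · exact stepA' p hW hR hl0 hlp hhc hwne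


lemma w_deg_le {g h : k[X]} {d : ℕ} (hdeg : max g.natDegree h.natDegree = d) (a b : k) :
    (C a * g - C b * h).natDegree ≤ d :=
  le_trans (natDegree_sub_le _ _)
    (le_trans (max_le_max (natDegree_C_mul_le _ _) (natDegree_C_mul_le _ _)) hdeg.le)

lemma pow_dvd_deg {w : k[X]} (hw : w ≠ 0) {e d : ℕ} {c : k}
    (h1 : (X - C c) ^ e ∣ w) (hdeg : w.natDegree ≤ d) : e ≤ d := by
  have := natDegree_le_of_dvd h1 hw
  rw [natDegree_pow, natDegree_X_sub_C, mul_one] at this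
  omega

lemma normalize3 (p : ℕ) [CharP k p] {d : ℕ} (hd : 0 < d)
    {c1 c2 c3 : k} (h12 : c1 ≠ c2) (h13 : c1 ≠ c3) (h23 : c2 ≠ c3)
    {l1 l2 l3 : ℕ} (hl1 : 0 < l1) (hl1p : l1 < p) (hl2 : 0 < l2) (hl2p : l2 < p)
    (hl3 : 0 < l3) (hl3p : l3 < p) (hsum : l1 + l2 + l3 + 2 = 2 * d)
    {g h : k[X]} (hco : IsCoprime g h) (hdeg : max g.natDegree h.natDegree = d)
    {lam : k} (hlam : lam ≠ 0)
    (hW : h * derivative g - g * derivative h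
      = C lam * ((X - C c1) ^ l1 * (X - C c2) ^ l2 * (X - C c3) ^ l3)) :
    ∃ u v : k[X], IsCoprime u v ∧ u ≠ 0 ∧ v ≠ 0 ∧
      u.natDegree ≤ d ∧ v.natDegree ≤ d ∧
      (X - C c1) ^ (l1 + 1) ∣ u ∧ (X - C c2) ^ (l2 + 1) ∣ v ∧
      (X - C c3) ^ (l3 + 1) ∣ (u - v) ∧ Rel u v g h := by
  -- step A at the three points
  have hW1 : h * derivative g - g * derivative h
      = C lam * (X - C c1) ^ l1 * ((X - C c2) ^ l2 * (X - C c3) ^ l3) := by rw [hW]; ring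
  have hR1 : ((X - C c2) ^ l2 * (X - C c3) ^ l3).eval c1 ≠ 0 := by
    simp only [eval_mul, eval_pow, eval_sub, eval_X, eval_C]
    exact mul_ne_zero (pow_ne_zero _ (sub_ne_zero.mpr h12)) (pow_ne_zero _ (sub_ne_zero.mpr h13))
  obtain ⟨hdvd1, hne1, hvec1⟩ := stepA p hco hW1 hlam hR1 hl1 hl1p
  have hW2 : h * derivative g - g * derivative h
      = C lam * (X - C c2) ^ l2 * ((X - C c1) ^ l1 * (X - C c3) ^ l3) := by rw [hW]; ring
  have hR2 : ((X - C c1) ^ l1 * (X - C c3) ^ l3).eval c2 ≠ 0 := by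
    simp only [eval_mul, eval_pow, eval_sub, eval_X, eval_C]
    exact mul_ne_zero (pow_ne_zero _ (sub_ne_zero.mpr (Ne.symm h12)))
      (pow_ne_zero _ (sub_ne_zero.mpr h23))
  obtain ⟨hdvd2, hne2, hvec2⟩ := stepA p hco hW2 hlam hR2 hl2 hl2p
  have hW3 : h * derivative g - g * derivative h
      = C lam * (X - C c3) ^ l3 * ((X - C c1) ^ l1 * (X - C c2) ^ l2) := by rw [hW]; ring
  have hR3 : ((X - C c1) ^ l1 * (X - C c2) ^ l2).eval c3 ≠ 0 := by
    simp only [eval_mul, eval_pow, eval_sub, eval_X, eval_C]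
    exact mul_ne_zero (pow_ne_zero _ (sub_ne_zero.mpr (Ne.symm h13)))
      (pow_ne_zero _ (sub_ne_zero.mpr (Ne.symm h23)))
  obtain ⟨hdvd3, hne3, hvec3⟩ := stepA p hco hW3 hlam hR3 hl3 hl3p
  -- names
  set w1 := C (h.eval c1) * g - C (g.eval c1) * h with hw1def
  set w2 := C (h.eval c2) * g - C (g.eval c2) * h with hw2def
  set w3 := C (h.eval c3) * g - C (g.eval c3) * h with hw3def
  have hdw1 : w1.natDegree ≤ d := w_deg_le hdeg _ _
  have hdw2 : w2.natDegree ≤ d := w_deg_le hdeg _ _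
  have hdw3 : w3.natDegree ≤ d := w_deg_le hdeg _ _
  have he1 : l1 + 1 ≤ d := pow_dvd_deg hne1 hdvd1 hdw1
  have he2 : l2 + 1 ≤ d := pow_dvd_deg hne2 hdvd2 hdw2
  have he3 : l3 + 1 ≤ d := pow_dvd_deg hne3 hdvd3 hdw3
  -- vector components
  have hvec1' : ¬(h.eval c1 = 0 ∧ -(g.eval c1) = 0) := by
    simp only [neg_eq_zero]; exact hvec1
  have hvec2' : ¬(h.eval c2 = 0 ∧ -(g.eval c2) = 0) := by
    simp only [neg_eq_zero]; exact hvec2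
  have hvec3' : ¬(h.eval c3 = 0 ∧ -(g.eval c3) = 0) := by
    simp only [neg_eq_zero]; exact hvec3
  -- determinants (division-free Cramer)
  have hΔ : h.eval c1 * -(g.eval c2) - h.eval c2 * -(g.eval c1) ≠ 0 := by
    intro h0
    obtain ⟨t, ht0, hta, htb⟩ := prop_of_det_zero hvec1' hvec2' h0
    have hw2w1 : w2 = C t * w1 := by
      rw [hw1def, hw2def, hta, show g.eval c2 = t * g.eval c1 by
        have := htb; rw [neg_eq_iff_eq_neg] at this; rw [this]; ring]
      simp only [C_mul]
      ring
    have hdvd2' : (X - C c2) ^ (l2 + 1) ∣ w1 := by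
      have ht : w1 = C t⁻¹ * w2 := by
        rw [hw2w1, ← mul_assoc, ← C_mul, inv_mul_cancel₀ ht0, C_1, one_mul]
      rw [ht]
      exact hdvd2.mul_left _
    exact deg_clash hne1 h12 hdvd1 hdvd2' hdw1 (by omega)
  have hα : h.eval c3 * -(g.eval c2) - h.eval c2 * -(g.eval c3) ≠ 0 := by
    intro h0
    have hnum' : h.eval c2 * -(g.eval c3) - h.eval c3 * -(g.eval c2) = 0 := by
      linear_combination -h0
    obtain ⟨t, ht0, hta, htb⟩ := prop_of_det_zero hvec2' hvec3' hnum'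
    have hw3w2 : w3 = C t * w2 := by
      rw [hw2def, hw3def, hta, show g.eval c3 = t * g.eval c2 by
        have := htb; rw [neg_eq_iff_eq_neg] at this; rw [this]; ring]
      simp only [C_mul]
      ring
    have hdvd3' : (X - C c3) ^ (l3 + 1) ∣ w2 := by
      have ht : w2 = C t⁻¹ * w3 := by
        rw [hw3w2, ← mul_assoc, ← C_mul, inv_mul_cancel₀ ht0, C_1, one_mul]
      rw [ht]
      exact hdvd3.mul_left _
    exact deg_clash hne2 h23 hdvd2 hdvd3' hdw2 (by omega)
  have hβ : h.eval c1 * -(g.eval c3) - h.eval c3 * -(g.eval c1) ≠ 0 := by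
    intro h0
    obtain ⟨t, ht0, hta, htb⟩ := prop_of_det_zero hvec1' hvec3' h0
    have hw3w1 : w3 = C t * w1 := by
      rw [hw1def, hw3def, hta, show g.eval c3 = t * g.eval c1 by
        have := htb; rw [neg_eq_iff_eq_neg] at this; rw [this]; ring]
      simp only [C_mul]
      ring
    have hdvd3' : (X - C c3) ^ (l3 + 1) ∣ w1 := by
      have ht : w1 = C t⁻¹ * w3 := by
        rw [hw3w1, ← mul_assoc, ← C_mul, inv_mul_cancel₀ ht0, C_1, one_mul]
      rw [ht]
      exact hdvd3.mul_left _
    exact deg_clash hne1 h13 hdvd1 hdvd3' hdw1 (by omega)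
  -- abbreviations for the three scalars
  have hαβw : C (h.eval c3 * -(g.eval c2) - h.eval c2 * -(g.eval c3)) * w1
      + C (h.eval c1 * -(g.eval c3) - h.eval c3 * -(g.eval c1)) * w2
      = C (h.eval c1 * -(g.eval c2) - h.eval c2 * -(g.eval c1)) * w3 := by
    rw [hw1def, hw2def, hw3def]
    simp only [C_sub, C_mul, C_neg]
    ring
  -- define u, v
  refine ⟨C (h.eval c3 * -(g.eval c2) - h.eval c2 * -(g.eval c3)) * w1,
    C (-(h.eval c1 * -(g.eval c3) - h.eval c3 * -(g.eval c1))) * w2, ?_, ?_, ?_, ?_, ?_, ?_, ?_, ?_, ?_⟩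
  · -- coprime
    have hu_eq : C (h.eval c3 * -(g.eval c2) - h.eval c2 * -(g.eval c3)) * w1
        = C ((h.eval c3 * -(g.eval c2) - h.eval c2 * -(g.eval c3)) * h.eval c1) * g
          + C ((h.eval c3 * -(g.eval c2) - h.eval c2 * -(g.eval c3)) * -(g.eval c1)) * h := by
      rw [hw1def]; simp only [C_mul, C_neg, C_sub]; ring
    have hv_eq : C (-(h.eval c1 * -(g.eval c3) - h.eval c3 * -(g.eval c1))) * w2
        = C (-(h.eval c1 * -(g.eval c3) - h.eval c3 * -(g.eval c1)) * h.eval c2) * g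
          + C (-(h.eval c1 * -(g.eval c3) - h.eval c3 * -(g.eval c1)) * -(g.eval c2)) * h := by
      rw [hw2def]; simp only [C_mul, C_neg, C_sub]; ring
    rw [hu_eq, hv_eq]
    apply coprime_combo hco
    have : (h.eval c3 * -(g.eval c2) - h.eval c2 * -(g.eval c3)) * h.eval c1
            * (-(h.eval c1 * -(g.eval c3) - h.eval c3 * -(g.eval c1)) * -(g.eval c2))
          - (h.eval c3 * -(g.eval c2) - h.eval c2 * -(g.eval c3)) * -(g.eval c1)
            * (-(h.eval c1 * -(g.eval c3) - h.eval c3 * -(g.eval c1)) * h.eval c2)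
        = -((h.eval c3 * -(g.eval c2) - h.eval c2 * -(g.eval c3))
          * ((h.eval c1 * -(g.eval c3) - h.eval c3 * -(g.eval c1))
          * (h.eval c1 * -(g.eval c2) - h.eval c2 * -(g.eval c1)))) := by ring
    rw [this]
    exact neg_ne_zero.mpr (mul_ne_zero hα (mul_ne_zero hβ hΔ))
  · exact mul_ne_zero (fun h0 => hα (by rwa [C_eq_zero] at h0)) hne1
  · exact mul_ne_zero (fun h0 => hβ (by rwa [C_eq_zero, neg_eq_zero] at h0)) hne2
  · exact le_trans (natDegree_C_mul_le _ _) hdw1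
  · exact le_trans (natDegree_C_mul_le _ _) hdw2
  · exact hdvd1.mul_left _
  · exact hdvd2.mul_left _
  · have heq : C (h.eval c3 * -(g.eval c2) - h.eval c2 * -(g.eval c3)) * w1
        - C (-(h.eval c1 * -(g.eval c3) - h.eval c3 * -(g.eval c1))) * w2
        = C (h.eval c1 * -(g.eval c2) - h.eval c2 * -(g.eval c1)) * w3 := by
      rw [← hαβw]; simp only [C_neg]; ring
    rw [heq]
    exact hdvd3.mul_left _
  · refine ⟨(h.eval c3 * -(g.eval c2) - h.eval c2 * -(g.eval c3)) * h.eval c1,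
      (h.eval c3 * -(g.eval c2) - h.eval c2 * -(g.eval c3)) * -(g.eval c1),
      -(h.eval c1 * -(g.eval c3) - h.eval c3 * -(g.eval c1)) * h.eval c2,
      -(h.eval c1 * -(g.eval c3) - h.eval c3 * -(g.eval c1)) * -(g.eval c2), ?_, ?_, ?_⟩
    · have : (h.eval c3 * -(g.eval c2) - h.eval c2 * -(g.eval c3)) * h.eval c1
              * (-(h.eval c1 * -(g.eval c3) - h.eval c3 * -(g.eval c1)) * -(g.eval c2))
            - (h.eval c3 * -(g.eval c2) - h.eval c2 * -(g.eval c3)) * -(g.eval c1)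
              * (-(h.eval c1 * -(g.eval c3) - h.eval c3 * -(g.eval c1)) * h.eval c2)
          = -((h.eval c3 * -(g.eval c2) - h.eval c2 * -(g.eval c3))
            * ((h.eval c1 * -(g.eval c3) - h.eval c3 * -(g.eval c1))
            * (h.eval c1 * -(g.eval c2) - h.eval c2 * -(g.eval c1)))) := by ring
      rw [this]
      exact neg_ne_zero.mpr (mul_ne_zero hα (mul_ne_zero hβ hΔ))
    · rw [hw1def]; simp only [C_mul, C_neg, C_sub]; ring
    · rw [hw2def]; simp only [C_mul, C_neg, C_sub]; ring


lemma core3 (p : ℕ) [CharP k p] {d : ℕ} (hd : 0 < d)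
    {c1 c2 c3 : k} (h12 : c1 ≠ c2) (h13 : c1 ≠ c3) (h23 : c2 ≠ c3)
    {l1 l2 l3 : ℕ} (hl1 : 0 < l1) (hl1p : l1 < p) (hl2 : 0 < l2) (hl2p : l2 < p)
    (hl3 : 0 < l3) (hl3p : l3 < p) (hsum : l1 + l2 + l3 + 2 = 2 * d)
    {g h g' h' : k[X]} (hco : IsCoprime g h) (hdeg : max g.natDegree h.natDegree = d)
    {lam : k} (hlam : lam ≠ 0)
    (hW : h * derivative g - g * derivative h
      = C lam * ((X - C c1) ^ l1 * (X - C c2) ^ l2 * (X - C c3) ^ l3))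
    (hco' : IsCoprime g' h') (hdeg' : max g'.natDegree h'.natDegree = d)
    {lam' : k} (hlam' : lam' ≠ 0)
    (hW' : h' * derivative g' - g' * derivative h'
      = C lam' * ((X - C c1) ^ l1 * (X - C c2) ^ l2 * (X - C c3) ^ l3)) :
    Rel g h g' h' := by
  obtain ⟨u, v, hcuv, hu0, hv0, hdu, hdv, hD1, hD2, hD3, hrel⟩ :=
    normalize3 p hd h12 h13 h23 hl1 hl1p hl2 hl2p hl3 hl3p hsum hco hdeg hlam hW
  obtain ⟨u', v', hcuv', hu0', hv0', hdu', hdv', hD1', hD2', hD3', hrel'⟩ :=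
    normalize3 p hd h12 h13 h23 hl1 hl1p hl2 hl2p hl3 hl3p hsum hco' hdeg' hlam' hW'
  -- the pairing D vanishes
  have hdvd1 : (X - C c1) ^ (l1 + 1) ∣ u * v' - u' * v :=
    dvd_sub (hD1.mul_right _) (hD1'.mul_right _)
  have hdvd2 : (X - C c2) ^ (l2 + 1) ∣ u * v' - u' * v := by
    have : u * v' - u' * v = u * v' - v * u' := by ring
    rw [this]
    exact dvd_sub (hD2'.mul_left _) (hD2.mul_right _)
  have hdvd3 : (X - C c3) ^ (l3 + 1) ∣ u * v' - u' * v := by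
    have : u * v' - u' * v = u' * (u - v) - u * (u' - v') := by ring
    rw [this]
    exact dvd_sub (hD3.mul_left _) (hD3'.mul_left _)
  have hcop12 : IsCoprime ((X - C c1) ^ (l1 + 1)) ((X - C c2) ^ (l2 + 1)) :=
    (isCoprime_X_sub_C_of_isUnit_sub ((sub_ne_zero.mpr h12).isUnit)).pow
  have hcop13 : IsCoprime ((X - C c1) ^ (l1 + 1)) ((X - C c3) ^ (l3 + 1)) :=
    (isCoprime_X_sub_C_of_isUnit_sub ((sub_ne_zero.mpr h13).isUnit)).pow
  have hcop23 : IsCoprime ((X - C c2) ^ (l2 + 1)) ((X - C c3) ^ (l3 + 1)) :=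
    (isCoprime_X_sub_C_of_isUnit_sub ((sub_ne_zero.mpr h23).isUnit)).pow
  have hdvd12 : (X - C c1) ^ (l1 + 1) * (X - C c2) ^ (l2 + 1) ∣ u * v' - u' * v :=
    hcop12.mul_dvd hdvd1 hdvd2
  have hdvdP : ((X - C c1) ^ (l1 + 1) * (X - C c2) ^ (l2 + 1)) * (X - C c3) ^ (l3 + 1)
      ∣ u * v' - u' * v :=
    (IsCoprime.mul_left hcop13 hcop23).mul_dvd hdvd12 hdvd3
  have hD0 : u * v' - u' * v = 0 := by
    by_contra hne
    have hle := natDegree_le_of_dvd hdvdP hne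
    rw [natDegree_mul (mul_ne_zero (pow_ne_zero _ (X_sub_C_ne_zero c1))
        (pow_ne_zero _ (X_sub_C_ne_zero c2))) (pow_ne_zero _ (X_sub_C_ne_zero c3)),
      natDegree_mul (pow_ne_zero _ (X_sub_C_ne_zero c1)) (pow_ne_zero _ (X_sub_C_ne_zero c2)),
      natDegree_pow, natDegree_pow, natDegree_pow, natDegree_X_sub_C, natDegree_X_sub_C,
      natDegree_X_sub_C, mul_one, mul_one, mul_one] at hle
    have hub : (u * v' - u' * v).natDegree ≤ 2 * d := by
      refine le_trans (natDegree_sub_le _ _) (max_le ?_ ?_)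
      · exact le_trans (natDegree_mul_le) (by omega)
      · exact le_trans (natDegree_mul_le) (by omega)
    omega
  have huv : u * v' = u' * v := sub_eq_zero.mp hD0
  have huu' : u ∣ u' := hcuv.dvd_of_dvd_mul_right ⟨v', by rw [← huv]⟩
  have hu'u : u' ∣ u := hcuv'.dvd_of_dvd_mul_right ⟨v, huv⟩
  obtain ⟨un, hun⟩ := associated_of_dvd_dvd huu' hu'u
  obtain ⟨r, hr, hCr⟩ := Polynomial.isUnit_iff.mp un.isUnit
  have hr0 : r ≠ 0 := IsUnit.ne_zero hr
  have hu' : u' = C r * u := by rw [← hun, ← hCr]; ring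
  have hv' : v' = C r * v := by
    apply mul_left_cancel₀ hu0
    rw [huv, hu']
    ring
  have hrel2 : Rel u v u' v' := by
    refine ⟨r⁻¹, 0, 0, r⁻¹, by simpa using inv_ne_zero hr0, ?_, ?_⟩
    · rw [hu', ← mul_assoc, ← C_mul, inv_mul_cancel₀ hr0, C_1, one_mul, C_0, zero_mul, add_zero]
    · rw [hv', ← mul_assoc, ← C_mul, inv_mul_cancel₀ hr0, C_1, one_mul, C_0, zero_mul, zero_add]
  exact (hrel.symm.trans hrel2).trans hrel' 


lemma core2 (p : ℕ) [CharP k p] {d : ℕ} (hd : 0 < d)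
    {c1 c2 : k} (h12 : c1 ≠ c2)
    {l1 l2 : ℕ} (hl1 : 0 < l1) (hl1p : l1 < p) (hl2 : 0 < l2) (hl2p : l2 < p)
    (hsum : l1 + l2 + 2 = 2 * d)
    {g h : k[X]} (hco : IsCoprime g h) (hdeg : max g.natDegree h.natDegree = d)
    {lam : k} (hlam : lam ≠ 0)
    (hW : h * derivative g - g * derivative h
      = C lam * ((X - C c1) ^ l1 * (X - C c2) ^ l2)) :
    Rel g h ((X - C c1) ^ d) ((X - C c2) ^ d) := by
  have hW1 : h * derivative g - g * derivative h
      = C lam * (X - C c1) ^ l1 * ((X - C c2) ^ l2) := by rw [hW]; ring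
  have hR1 : ((X - C c2) ^ l2).eval c1 ≠ 0 := by
    simp only [eval_pow, eval_sub, eval_X, eval_C]
    exact pow_ne_zero _ (sub_ne_zero.mpr h12)
  obtain ⟨hdvd1, hne1, hvec1⟩ := stepA p hco hW1 hlam hR1 hl1 hl1p
  have hW2 : h * derivative g - g * derivative h
      = C lam * (X - C c2) ^ l2 * ((X - C c1) ^ l1) := by rw [hW]; ring
  have hR2 : ((X - C c1) ^ l1).eval c2 ≠ 0 := by
    simp only [eval_pow, eval_sub, eval_X, eval_C]
    exact pow_ne_zero _ (sub_ne_zero.mpr (Ne.symm h12))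
  obtain ⟨hdvd2, hne2, hvec2⟩ := stepA p hco hW2 hlam hR2 hl2 hl2p
  set w1 := C (h.eval c1) * g - C (g.eval c1) * h with hw1def
  set w2 := C (h.eval c2) * g - C (g.eval c2) * h with hw2def
  have hdw1 : w1.natDegree ≤ d := w_deg_le hdeg _ _
  have hdw2 : w2.natDegree ≤ d := w_deg_le hdeg _ _
  have he1 : l1 + 1 ≤ d := pow_dvd_deg hne1 hdvd1 hdw1
  have he2 : l2 + 1 ≤ d := pow_dvd_deg hne2 hdvd2 hdw2
  have hl1d : l1 + 1 = d := by omega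
  have hl2d : l2 + 1 = d := by omega
  rw [hl1d] at hdvd1
  rw [hl2d] at hdvd2
  -- w1 is a scalar multiple of (X - C c1)^d
  have hscal : ∀ (w : k[X]) (c : k), w ≠ 0 → w.natDegree ≤ d → (X - C c) ^ d ∣ w →
      ∃ γ : k, γ ≠ 0 ∧ w = C γ * (X - C c) ^ d := by
    intro w c hw hwd hdvd
    obtain ⟨q, hq⟩ := hdvd
    have hq0 : q ≠ 0 := by
      intro h0
      rw [h0, mul_zero] at hq
      exact hw hq
    have hdeg2 : w.natDegree = d + q.natDegree := by
      rw [hq, natDegree_mul (pow_ne_zero _ (X_sub_C_ne_zero c)) hq0, natDegree_pow,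
        natDegree_X_sub_C, mul_one]
    have hqd : q.natDegree = 0 := by omega
    refine ⟨q.coeff 0, ?_, ?_⟩
    · intro h0
      apply hq0
      rw [eq_C_of_natDegree_eq_zero hqd, h0, C_0]
    · rw [hq]
      conv_lhs => rw [eq_C_of_natDegree_eq_zero hqd]
      ring
  obtain ⟨γ1, hγ1, hw1eq⟩ := hscal w1 c1 hne1 hdw1 hdvd1
  obtain ⟨γ2, hγ2, hw2eq⟩ := hscal w2 c2 hne2 hdw2 hdvd2
  -- determinant of coefficient vectors
  have hvec1' : ¬(h.eval c1 = 0 ∧ -(g.eval c1) = 0) := by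
    simp only [neg_eq_zero]; exact hvec1
  have hvec2' : ¬(h.eval c2 = 0 ∧ -(g.eval c2) = 0) := by
    simp only [neg_eq_zero]; exact hvec2
  have hΔ : h.eval c1 * -(g.eval c2) - h.eval c2 * -(g.eval c1) ≠ 0 := by
    intro h0
    obtain ⟨t, ht0, hta, htb⟩ := prop_of_det_zero hvec1' hvec2' h0
    have hw2w1 : w2 = C t * w1 := by
      rw [hw1def, hw2def, hta, show g.eval c2 = t * g.eval c1 by
        have := htb; rw [neg_eq_iff_eq_neg] at this; rw [this]; ring]
      simp only [C_mul]
      ring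
    have hdvd2' : (X - C c2) ^ d ∣ w1 := by
      have ht : w1 = C t⁻¹ * w2 := by
        rw [hw2w1, ← mul_assoc, ← C_mul, inv_mul_cancel₀ ht0, C_1, one_mul]
      rw [ht]
      exact hdvd2.mul_left _
    exact deg_clash hne1 h12 hdvd1 hdvd2' hdw1 (by omega)
  -- assemble: Rel w1 w2 g h, then invert, then substitute
  have hrel1 : Rel w1 w2 g h := by
    refine ⟨h.eval c1, -(g.eval c1), h.eval c2, -(g.eval c2), ?_, ?_, ?_⟩
    · intro h0
      exact hΔ (by linear_combination h0)
    · rw [hw1def]; simp only [C_neg]; ring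
    · rw [hw2def]; simp only [C_neg]; ring
  have hrel2 : Rel w1 w2 ((X - C c1) ^ d) ((X - C c2) ^ d) := by
    refine ⟨γ1, 0, 0, γ2, by simpa using mul_ne_zero hγ1 hγ2, ?_, ?_⟩
    · rw [hw1eq, C_0, zero_mul, add_zero]
    · rw [hw2eq, C_0, zero_mul, zero_add]
  exact hrel1.symm.trans hrel2

lemma core1 (p : ℕ) [CharP k p] {d : ℕ} (hd : 0 < d)
    {c1 : k} {l1 : ℕ} (hl1 : 0 < l1) (hl1p : l1 < p) (hsum : l1 + 2 = 2 * d)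
    {g h : k[X]} (hco : IsCoprime g h) (hdeg : max g.natDegree h.natDegree = d)
    {lam : k} (hlam : lam ≠ 0)
    (hW : h * derivative g - g * derivative h = C lam * (X - C c1) ^ l1) :
    False := by
  have hW1 : h * derivative g - g * derivative h
      = C lam * (X - C c1) ^ l1 * (1 : k[X]) := by rw [hW]; ring
  have hR1 : (1 : k[X]).eval c1 ≠ 0 := by simp
  obtain ⟨hdvd1, hne1, hvec1⟩ := stepA p hco hW1 hlam hR1 hl1 hl1p
  have hdw1 : (C (h.eval c1) * g - C (g.eval c1) * h).natDegree ≤ d := w_deg_le hdeg _ _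
  have he1 : l1 + 1 ≤ d := pow_dvd_deg hne1 hdvd1 hdw1
  omega

lemma core0 {g h : k[X]} (hco : IsCoprime g h)
    (hdeg : max g.natDegree h.natDegree = 1) :
    Rel g h X 1 := by
  have hg1 : g.natDegree ≤ 1 := le_trans (le_max_left _ _) hdeg.le
  have hh1 : h.natDegree ≤ 1 := le_trans (le_max_right _ _) hdeg.le
  have hgrep := eq_X_add_C_of_natDegree_le_one hg1
  have hhrep := eq_X_add_C_of_natDegree_le_one hh1
  have hgne : g ≠ 0 := by
    intro h0
    rw [h0] at hco hdeg
    have := natDegree_eq_zero_of_isUnit (isCoprime_zero_left.mp hco)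
    simp [this] at hdeg
  have hhne : h ≠ 0 := by
    intro h0
    rw [h0] at hco hdeg
    have := natDegree_eq_zero_of_isUnit (isCoprime_zero_right.mp hco)
    simp [this] at hdeg
  have hvg : ¬(g.coeff 1 = 0 ∧ g.coeff 0 = 0) := by
    rintro ⟨h1, h0⟩
    apply hgne
    rw [hgrep, h1, h0]
    simp
  have hvh : ¬(h.coeff 1 = 0 ∧ h.coeff 0 = 0) := by
    rintro ⟨h1, h0⟩
    apply hhne
    rw [hhrep, h1, h0]
    simp
  have hdet : g.coeff 1 * h.coeff 0 - h.coeff 1 * g.coeff 0 ≠ 0 := by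
    intro h0
    obtain ⟨t, ht0, hta, htb⟩ := prop_of_det_zero hvg hvh h0
    have hht : h = C t * g := by
      rw [hhrep, hgrep, hta, htb]
      simp only [C_mul]
      ring
    have hu : IsUnit g := hco.isUnit_of_dvd' dvd_rfl ⟨C t, by rw [hht]; ring⟩
    have hnd : g.natDegree = 0 := natDegree_eq_zero_of_isUnit hu
    have hhd : h.natDegree ≤ 0 := by
      rw [hht]
      exact le_trans (natDegree_C_mul_le _ _) (le_of_eq hnd)
    rw [hnd] at hdeg
    omega
  refine ⟨g.coeff 1, g.coeff 0, h.coeff 1, h.coeff 0, ?_, ?_, ?_⟩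
  · intro h0
    exact hdet (by linear_combination h0)
  · rw [mul_one]; exact hgrep
  · rw [mul_one]; exact hhrep

end ThreePointAux

/-- Over an algebraically closed field of characteristic `p > 0`, if `n ≤ 3` points
`c₁, …, c_n` and positive integers `l₁, …, l_n < p` with `∑ lᵢ = 2d − 2` are given,
then there are finitely many rational functions `f₁, …, f_m` such that every degree `d`
cover `ℙ¹ → ℙ¹`, written as `g/h` with `g, h` coprime and `max(deg g, deg h) = d`,
whose discriminant `h·g′ − g·h′` equals `λ·∏ᵢ (x − cᵢ)^{lᵢ}` for some `λ ≠ 0`, is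
equivalent to some `f_j` via a fractional linear transformation of the target; i.e.
there are finitely many equivalence classes of degree `d` covers with ramification
locus `{c₁, …, c_n}` and differential length `lᵢ` at each `cᵢ`. -/
theorem finitely_many_classes_three_points
    (k : Type*) [Field k] [IsAlgClosed k] (p : ℕ) (hp : 0 < p) [CharP k p]
    (d : ℕ) (hd : 0 < d) (n : ℕ) (hn : n ≤ 3)
    (c : Fin n → k) (hc : Function.Injective c)
    (l : Fin n → ℕ) (hl : ∀ i, 0 < l i ∧ l i < p)
    (hsum : ∑ i, l i = 2 * d - 2) :
    ∃ (m : ℕ) (f : Fin m → RatFunc k),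
      ∀ g h : k[X], IsCoprime g h → max g.natDegree h.natDegree = d →
        (∃ lam : k, lam ≠ 0 ∧
          h * derivative g - g * derivative h
            = C lam * ∏ i, (X - C (c i)) ^ (l i)) →
        ∃ (j : Fin m) (a b cc e : k), a * e - b * cc ≠ 0 ∧
          algebraMap k[X] (RatFunc k) g / algebraMap k[X] (RatFunc k) h
            = (RatFunc.C a * f j + RatFunc.C b) / (RatFunc.C cc * f j + RatFunc.C e) := by
  classical
  by_cases hex : ∃ g h : k[X], IsCoprime g h ∧ max g.natDegree h.natDegree = d ∧
      ∃ lam : k, lam ≠ 0 ∧ h * derivative g - g * derivative h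
        = C lam * ∏ i, (X - C (c i)) ^ (l i)
  · obtain ⟨g₀, h₀, hco₀, hdeg₀, lam₀, hlam₀, hW₀⟩ := hex
    refine ⟨1, fun _ => algebraMap k[X] (RatFunc k) g₀ / algebraMap k[X] (RatFunc k) h₀, ?_⟩
    intro g h hco hdeg hWex
    obtain ⟨lam, hlam, hW⟩ := hWex
    -- nonvanishing of the denominators
    have hne_pair : ∀ g' h' : k[X], IsCoprime g' h' → max g'.natDegree h'.natDegree = d →
        h' ≠ 0 := by
      intro g' h' hco' hdeg' h0
      rw [h0] at hco' hdeg'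
      have h1 := natDegree_eq_zero_of_isUnit (isCoprime_zero_right.mp hco')
      simp [h1] at hdeg'
      omega
    have hhne : h ≠ 0 := hne_pair g h hco hdeg
    have hh0ne : h₀ ≠ 0 := hne_pair g₀ h₀ hco₀ hdeg₀
    have hrel : ThreePointAux.Rel g h g₀ h₀ := by
      interval_cases n
      · -- n = 0
        have hd1 : d = 1 := by
          simp only [Finset.univ_eq_empty, Finset.sum_empty] at hsum
          omega
        exact (ThreePointAux.core0 hco (by rw [hd1] at hdeg; exact hdeg)).trans
          (ThreePointAux.core0 hco₀ (by rw [hd1] at hdeg₀; exact hdeg₀)).symm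
      · -- n = 1
        rw [Fin.sum_univ_one] at hsum
        rw [Fin.prod_univ_one] at hW
        exact absurd (ThreePointAux.core1 p hd (hl 0).1 (hl 0).2 (by omega) hco hdeg hlam hW) id
      · -- n = 2
        rw [Fin.sum_univ_two] at hsum
        rw [Fin.prod_univ_two] at hW hW₀
        have h01 : c 0 ≠ c 1 := hc.ne (by decide)
        exact (ThreePointAux.core2 p hd h01 (hl 0).1 (hl 0).2 (hl 1).1 (hl 1).2 (by omega)
            hco hdeg hlam hW).trans
          (ThreePointAux.core2 p hd h01 (hl 0).1 (hl 0).2 (hl 1).1 (hl 1).2 (by omega)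
            hco₀ hdeg₀ hlam₀ hW₀).symm
      · -- n = 3
        rw [Fin.sum_univ_three] at hsum
        rw [Fin.prod_univ_three] at hW hW₀
        exact ThreePointAux.core3 p hd (hc.ne (by decide)) (hc.ne (by decide))
          (hc.ne (by decide)) (hl 0).1 (hl 0).2 (hl 1).1 (hl 1).2 (hl 2).1 (hl 2).2
          (by omega) hco hdeg hlam hW hco₀ hdeg₀ hlam₀ hW₀
    obtain ⟨a, b, cc, e, hdet, hg, hh⟩ := hrel
    refine ⟨0, a, b, cc, e, hdet, ?_⟩
    have hH : algebraMap k[X] (RatFunc k) h₀ ≠ 0 := RatFunc.algebraMap_ne_zero hh0ne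
    have hAg : algebraMap k[X] (RatFunc k) g
        = RatFunc.C a * algebraMap k[X] (RatFunc k) g₀
          + RatFunc.C b * algebraMap k[X] (RatFunc k) h₀ := by
      rw [hg]
      simp [map_add, map_mul, RatFunc.algebraMap_C]
    have hAh : algebraMap k[X] (RatFunc k) h
        = RatFunc.C cc * algebraMap k[X] (RatFunc k) g₀
          + RatFunc.C e * algebraMap k[X] (RatFunc k) h₀ := by
      rw [hh]
      simp [map_add, map_mul, RatFunc.algebraMap_C]
    have hden_ne : RatFunc.C cc * algebraMap k[X] (RatFunc k) g₀
        + RatFunc.C e * algebraMap k[X] (RatFunc k) h₀ ≠ 0 := by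
      rw [← hAh]
      exact RatFunc.algebraMap_ne_zero hhne
    rw [hAg, hAh]
    set G := algebraMap k[X] (RatFunc k) g₀ with hG
    set H := algebraMap k[X] (RatFunc k) h₀ with hHdef
    show (RatFunc.C a * G + RatFunc.C b * H) / (RatFunc.C cc * G + RatFunc.C e * H)
      = (RatFunc.C a * (G / H) + RatFunc.C b) / (RatFunc.C cc * (G / H) + RatFunc.C e)
    have hden2 : RatFunc.C cc * (G / H) + RatFunc.C e
        = (RatFunc.C cc * G + RatFunc.C e * H) / H := by
      field_simp
    have hnum : (RatFunc.C a * (G / H) + RatFunc.C b) * H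
        = RatFunc.C a * G + RatFunc.C b * H := by
      field_simp
    rw [hden2, div_div_eq_mul_div, hnum]
  · refine ⟨0, Fin.elim0, ?_⟩
    intro g h h1 h2 h3
    exact absurd ⟨g, h, h1, h2, h3⟩ hex
end
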